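/- arXiv:2102.08508 — 4 statements merged into one kernel-verified Lean document; each statement's English description precedes it below -/
import Mathlib

section
/- For all integers n ≥ 2, 1 ≤ j ≤ n−1, and 0 ≤ d ≤ n−1, one has (as an identity of integers) A(n, d, j+1) = A(n,d,j) + A(n−1, d−1, j) − A(n−1, d, j). -/
/-- The word `π₁π₂⋯πₙ` of a permutation of `[n] = {1, …, n}`. -/
def permWord (n : ℕ) (π : Equiv.Perm (Fin n)) : ℕ → ℕ :=
  fun i => if h : i < n then (π ⟨i, h⟩ : ℕ) + 1 else 0

/-- The number of descents of a permutation of `[n]`. -/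
def desNum (n : ℕ) (π : Equiv.Perm (Fin n)) : ℕ :=
  ((Finset.range (n - 1)).filter (fun i => permWord n π (i + 1) < permWord n π i)).card

/-- `A(n,d,j)`: the number of permutations of `[n]` with `d` descents and first
letter `j`; by convention `0` unless `n ≥ 1`, `0 ≤ d ≤ n-1` and `1 ≤ j ≤ n`. -/
noncomputable def eulerianFirst (n d j : ℤ) : ℕ :=
  if 1 ≤ n ∧ 0 ≤ d ∧ 1 ≤ j then
    Nat.card {π : Equiv.Perm (Fin n.toNat) //
      desNum n.toNat π = d.toNat ∧ permWord n.toNat π 0 = j.toNat}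
  else 0

namespace EF

def uval (a v : ℕ) : ℕ := if v ≤ a then v else v - 1
def vval (a w : ℕ) : ℕ := if w ≤ a then w else w + 1

lemma uval_vval (a w : ℕ) : uval a (vval a w) = w := by
  unfold uval vval; split_ifs <;> omega

lemma vval_uval (a v : ℕ) (h : v ≠ a + 1) : vval a (uval a v) = v := by
  unfold uval vval; split_ifs <;> omega

lemma vval_lt_iff (a x y : ℕ) : vval a x < vval a y ↔ x < y := by
  unfold vval; split_ifs <;> omega

lemma vval_ne (a w : ℕ) : vval a w ≠ a + 1 := by unfold vval; split_ifs <;> omega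

lemma uval_inj (a x y : ℕ) (hx : x ≠ a + 1) (hy : y ≠ a + 1)
    (h : uval a x = uval a y) : x = y := by
  unfold uval at h; split_ifs at h <;> omega

lemma uval_lt {a m v : ℕ} (ha : a + 1 < m) (hv : v < m) : uval a v < m - 1 := by
  unfold uval; split_ifs <;> omega

lemma vval_lt {a m w : ℕ} (ha : a + 1 < m) (hw : w < m - 1) : vval a w < m := by
  unfold vval; split_ifs <;> omega

lemma permWord_eq (m : ℕ) (π : Equiv.Perm (Fin m)) (i : ℕ) (h : i < m) :
    permWord m π i = (π ⟨i, h⟩ : ℕ) + 1 := dif_pos h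

lemma apply_mk_congr {m : ℕ} (σ : Equiv.Perm (Fin m)) {i j : ℕ} {h : i < m} (e : i = j) :
    (σ ⟨i, h⟩ : ℕ) = (σ ⟨j, e ▸ h⟩ : ℕ) := by subst e; rfl

lemma apply_mk_congr' {m : ℕ} (σ : Equiv.Perm (Fin m)) {i j : ℕ} {h : i < m} {h' : j < m}
    (e : i = j) : (σ ⟨i, h⟩ : ℕ) = (σ ⟨j, h'⟩ : ℕ) := by subst e; rfl

/-- val-level injectivity -/
lemma apply_val_inj {m : ℕ} (σ : Equiv.Perm (Fin m)) {i j : ℕ} {hi : i < m} {hj : j < m}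
    (h : (σ ⟨i, hi⟩ : ℕ) = (σ ⟨j, hj⟩ : ℕ)) : i = j := by
  have := σ.injective (Fin.val_injective h)
  simpa [Fin.ext_iff] using this

lemma sum_shift (f : ℕ → ℕ) {m : ℕ} (hm : 2 ≤ m) :
    ∑ i ∈ Finset.range (m - 1), f i = (∑ i ∈ Finset.range (m - 2), f (i + 1)) + f 0 := by
  obtain ⟨M, rfl⟩ : ∃ M, m = M + 2 := ⟨m - 2, by omega⟩
  rw [show M + 2 - 1 = M + 1 from rfl, show M + 2 - 2 = M from rfl]
  exact Finset.sum_range_succ' f M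

lemma desNum_eq_sum (m : ℕ) (π : Equiv.Perm (Fin m)) :
    desNum m π = ∑ i ∈ Finset.range (m - 1),
      (if permWord m π (i + 1) < permWord m π i then 1 else 0) := by
  rw [desNum, Finset.card_filter]

end EF

namespace EF

section Swap

variable {m a : ℕ} (ha : a + 1 < m)

lemma swap_val (x : Fin m) :
    ((Equiv.swap (⟨a, by omega⟩ : Fin m) ⟨a + 1, ha⟩) x : ℕ) =
      if (x : ℕ) = a then a + 1 else if (x : ℕ) = a + 1 then a else x := by
  rw [Equiv.swap_apply_def]
  split_ifs with h1 h2 h3 h4 h5 <;>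
    simp_all [Fin.ext_iff]

set_option maxHeartbeats 2000000 in
lemma des_swap (σ : Equiv.Perm (Fin m)) (h0m : 0 < m) (h1m' : 1 < m)
    (h0 : (σ ⟨0, h0m⟩ : ℕ) = a) :
    desNum m (Equiv.swap (⟨a, by omega⟩ : Fin m) ⟨a + 1, ha⟩ * σ) =
      desNum m σ + (if (σ ⟨1, h1m'⟩ : ℕ) = a + 1 then 1 else 0) := by
  have hm : 2 ≤ m := by omega
  obtain ⟨M, rfl⟩ : ∃ M, m = M + 2 := ⟨m - 2, by omega⟩
  have hne : ∀ (i : ℕ) (hi : i < M + 2), i ≠ 0 → (σ ⟨i, hi⟩ : ℕ) ≠ a := by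
    intro i hi hi0 h
    exact hi0 (EF.apply_val_inj σ (h.trans h0.symm))
  rw [desNum_eq_sum, desNum_eq_sum]
  have hr : M + 2 - 1 = M + 1 := rfl
  rw [hr, Finset.sum_range_succ' _ M, Finset.sum_range_succ' _ M]
  have hsum : ∀ i ∈ Finset.range M,
      (if permWord (M+2) (Equiv.swap (⟨a, by omega⟩ : Fin (M+2)) ⟨a + 1, ha⟩ * σ) (i+1+1) <
          permWord (M+2) (Equiv.swap (⟨a, by omega⟩ : Fin (M+2)) ⟨a + 1, ha⟩ * σ) (i+1)
        then 1 else 0) =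
      (if permWord (M+2) σ (i+1+1) < permWord (M+2) σ (i+1) then 1 else 0) := by
    intro i hi
    rw [Finset.mem_range] at hi
    have h2 : i + 1 + 1 < M + 2 := by omega
    have h1 : i + 1 < M + 2 := by omega
    rw [permWord_eq _ _ _ h2, permWord_eq _ _ _ h1, permWord_eq _ _ _ h2,
      permWord_eq _ _ _ h1]
    rw [Equiv.Perm.mul_apply, Equiv.Perm.mul_apply, swap_val ha, swap_val ha]
    have n2 := hne _ h2 (by omega)
    have n1 := hne _ h1 (by omega)
    have nd : (σ ⟨i+1+1, h2⟩ : ℕ) ≠ (σ ⟨i+1, h1⟩ : ℕ) := by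
      intro h; have := EF.apply_val_inj σ h; omega
    split_ifs <;> omega
  rw [Finset.sum_congr rfl hsum]
  rw [permWord_eq _ _ _ h1m', permWord_eq _ _ _ h0m, permWord_eq _ _ _ h1m',
    permWord_eq _ _ _ h0m, Equiv.Perm.mul_apply, Equiv.Perm.mul_apply,
    swap_val ha, swap_val ha]
  have n1 : (σ ⟨1, h1m'⟩ : ℕ) ≠ a := hne _ h1m' (by omega)
  have nd : (σ ⟨1, h1m'⟩ : ℕ) ≠ (σ ⟨0, h0m⟩ : ℕ) := by
    intro h; have := EF.apply_val_inj σ h; omega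
  split_ifs <;> omega

end Swap
end EF

namespace EF

def cnt (m e l : ℕ) : ℕ :=
  (Finset.univ.filter
    (fun π : Equiv.Perm (Fin m) => desNum m π = e ∧ permWord m π 0 = l)).card

/-- first letter l, second letter l+1, d descents -/
def cntD (m e l : ℕ) : ℕ :=
  (Finset.univ.filter
    (fun π : Equiv.Perm (Fin m) =>
      desNum m π = e ∧ permWord m π 0 = l ∧ permWord m π 1 = l + 1)).card

/-- first letter l, second letter l+1, descents+1 = e -/
def cntP (m e l : ℕ) : ℕ :=
  (Finset.univ.filter
    (fun π : Equiv.Perm (Fin m) =>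
      desNum m π + 1 = e ∧ permWord m π 0 = l ∧ permWord m π 1 = l + 1)).card

/-- first letter l, second letter ≠ l+1, d descents -/
def cntA (m e l : ℕ) : ℕ :=
  (Finset.univ.filter
    (fun π : Equiv.Perm (Fin m) =>
      desNum m π = e ∧ permWord m π 0 = l ∧ permWord m π 1 ≠ l + 1)).card

/-- target of the swap bijection -/
def cntS (m e l : ℕ) : ℕ :=
  (Finset.univ.filter
    (fun π : Equiv.Perm (Fin m) =>
      desNum m π + (if permWord m π 1 = l + 1 then 1 else 0) = e ∧
        permWord m π 0 = l)).card

lemma permWord_eq_iff {m : ℕ} (π : Equiv.Perm (Fin m)) {i : ℕ} (h : i < m) (l : ℕ) :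
    permWord m π i = l + 1 ↔ (π ⟨i, h⟩ : ℕ) = l := by
  rw [permWord_eq m π i h]; omega

section SwapCount

variable {m a : ℕ} (ha : a + 1 < m)

lemma cnt_eq_cntS (ha : a + 1 < m) (e : ℕ) : cnt m e (a + 2) = cntS m e (a + 1) := by
  classical
  have h0m : (0:ℕ) < m := by omega
  have h1m : (1:ℕ) < m := by omega
  set s : Equiv.Perm (Fin m) := Equiv.swap (⟨a, by omega⟩ : Fin m) ⟨a + 1, ha⟩ with hs
  have hss : ∀ π : Equiv.Perm (Fin m), s * (s * π) = π := by
    intro π; rw [hs, ← mul_assoc, Equiv.swap_mul_self, one_mul]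
  have hsval : ∀ x : Fin m, ((s x : Fin m) : ℕ) =
      if (x : ℕ) = a then a + 1 else if (x : ℕ) = a + 1 then a else x :=
    swap_val ha
  apply Finset.card_bij' (fun π _ => s * π) (fun π _ => s * π)
  · -- hi : maps into cntS set
    intro π hπ
    rw [Finset.mem_filter] at hπ ⊢
    obtain ⟨-, hdes, hw0⟩ := hπ
    rw [permWord_eq_iff π h0m (a+1)] at hw0
    have hσ0 : ((s * π) ⟨0, h0m⟩ : ℕ) = a := by
      rw [Equiv.Perm.mul_apply, hsval]; split_ifs <;> omega
    have hd := des_swap ha (s * π) h0m h1m hσ0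
    rw [show Equiv.swap (⟨a, by omega⟩ : Fin m) ⟨a + 1, ha⟩ * (s * π) = π from hss π] at hd
    refine ⟨Finset.mem_univ _, ?_, ?_⟩
    · simp only [permWord_eq_iff (s * π) h1m (a+1)]
      exact hd.symm.trans hdes
    · rw [permWord_eq_iff (s * π) h0m a]
      exact hσ0
  · -- hj : maps back
    intro σ hσ
    rw [Finset.mem_filter] at hσ ⊢
    obtain ⟨-, hdes, hw0⟩ := hσ
    rw [permWord_eq_iff σ h0m a] at hw0
    simp only [permWord_eq_iff σ h1m (a+1)] at hdes
    have hd := des_swap ha σ h0m h1m hw0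
    refine ⟨Finset.mem_univ _, hd.trans hdes, ?_⟩
    rw [permWord_eq_iff (s * σ) h0m (a+1), Equiv.Perm.mul_apply, hsval]
    split_ifs <;> omega
  · intro π _; exact hss π
  · intro σ _; exact hss σ

end SwapCount
end EF

namespace EF

lemma cntS_split (m e l : ℕ) : cntS m e l = cntA m e l + cntP m e l := by
  classical
  unfold cntS cntA cntP
  rw [← Finset.card_filter_add_card_filter_not
    (p := fun π : Equiv.Perm (Fin m) => permWord m π 1 ≠ l + 1)
    (s := Finset.univ.filter (fun π : Equiv.Perm (Fin m) =>
      (desNum m π + (if permWord m π 1 = l + 1 then 1 else 0) = e ∧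
        permWord m π 0 = l)))]
  congr 1
  · rw [Finset.filter_filter]
    apply congrArg Finset.card
    apply Finset.filter_congr
    intro x _
    by_cases hx : permWord m x 1 = l + 1 <;> simp [hx] <;> omega
  · rw [Finset.filter_filter]
    apply congrArg Finset.card
    apply Finset.filter_congr
    intro x _
    by_cases hx : permWord m x 1 = l + 1 <;> simp [hx] <;> omega

lemma cnt_split (m e l : ℕ) : cnt m e l = cntA m e l + cntD m e l := by
  classical
  unfold cnt cntA cntD
  rw [← Finset.card_filter_add_card_filter_not
    (p := fun π : Equiv.Perm (Fin m) => permWord m π 1 ≠ l + 1)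
    (s := Finset.univ.filter (fun π : Equiv.Perm (Fin m) =>
      desNum m π = e ∧ permWord m π 0 = l))]
  congr 1
  · rw [Finset.filter_filter]
    apply congrArg Finset.card
    apply Finset.filter_congr
    intro x _
    by_cases hx : permWord m x 1 = l + 1 <;> simp [hx]
  · rw [Finset.filter_filter]
    apply congrArg Finset.card
    apply Finset.filter_congr
    intro x _
    by_cases hx : permWord m x 1 = l + 1 <;> simp [hx]

lemma cntP_zero (m l : ℕ) : cntP m 0 l = 0 := by
  classical
  unfold cntP
  rw [Finset.card_eq_zero]
  apply Finset.filter_false_of_mem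
  intro x _
  simp

lemma cntP_succ (m e l : ℕ) : cntP m (e + 1) l = cntD m e l := by
  classical
  unfold cntP cntD
  apply congrArg Finset.card
  apply Finset.filter_congr
  intro x _
  constructor
  · rintro ⟨h1, h2, h3⟩; exact ⟨by omega, h2, h3⟩
  · rintro ⟨h1, h2, h3⟩; exact ⟨by omega, h2, h3⟩

end EF

namespace EF
section Del

variable {m a : ℕ}

def fwdFun (m a : ℕ) (ha : a + 1 < m) (σ : Equiv.Perm (Fin m)) (i : Fin (m - 1)) :
    Fin (m - 1) :=
  ⟨uval a (σ ⟨if (i : ℕ) = 0 then 0 else (i : ℕ) + 1, by have := i.isLt; split <;> omega⟩),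
    uval_lt ha (Fin.is_lt _)⟩

def bwdFun (m a : ℕ) (ha : a + 1 < m) (τ : Equiv.Perm (Fin (m - 1))) (p : Fin m) : Fin m :=
  if (p : ℕ) = 0 then ⟨a, by omega⟩
  else if (p : ℕ) = 1 then ⟨a + 1, ha⟩
  else ⟨vval a (τ ⟨(p : ℕ) - 1, by have := p.isLt; omega⟩), vval_lt ha (Fin.is_lt _)⟩

lemma fwdFun_val (ha : a + 1 < m) (σ : Equiv.Perm (Fin m)) (p : ℕ) (hp : p < m - 1) :
    (fwdFun m a ha σ ⟨p, hp⟩ : ℕ) =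
      uval a (σ ⟨if p = 0 then 0 else p + 1, by split <;> omega⟩) := rfl

lemma bwdFun_val0 (ha : a + 1 < m) (τ : Equiv.Perm (Fin (m - 1))) (h : (0:ℕ) < m) :
    (bwdFun m a ha τ ⟨0, h⟩ : ℕ) = a := by
  simp [bwdFun]

lemma bwdFun_val1 (ha : a + 1 < m) (τ : Equiv.Perm (Fin (m - 1))) (h : (1:ℕ) < m) :
    (bwdFun m a ha τ ⟨1, h⟩ : ℕ) = a + 1 := by
  simp [bwdFun]

lemma bwdFun_val2 (ha : a + 1 < m) (τ : Equiv.Perm (Fin (m - 1))) (p : ℕ) (hp2 : 2 ≤ p)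
    (hpm : p < m) :
    (bwdFun m a ha τ ⟨p, hpm⟩ : ℕ) = vval a (τ ⟨p - 1, by omega⟩) := by
  unfold bwdFun
  rw [if_neg (by simp; omega), if_neg (by simp; omega)]

lemma fwd_inj (ha : a + 1 < m) (σ : Equiv.Perm (Fin m)) (h0m : 0 < m) (h1m : 1 < m)
    (h0 : (σ ⟨0, h0m⟩ : ℕ) = a) (h1 : (σ ⟨1, h1m⟩ : ℕ) = a + 1) :
    Function.Injective (fwdFun m a ha σ) := by
  have hne1 : ∀ (q : ℕ) (hq : q < m), q ≠ 1 → (σ ⟨q, hq⟩ : ℕ) ≠ a + 1 := by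
    intro q hq hq1 h
    exact hq1 (apply_val_inj σ (h.trans h1.symm))
  have hne0 : ∀ (q : ℕ) (hq : q < m), q ≠ 0 → (σ ⟨q, hq⟩ : ℕ) ≠ a := by
    intro q hq hq0 h
    exact hq0 (apply_val_inj σ (h.trans h0.symm))
  rintro ⟨i, hi⟩ ⟨i', hi'⟩ h
  have hval : (fwdFun m a ha σ ⟨i, hi⟩ : ℕ) = (fwdFun m a ha σ ⟨i', hi'⟩ : ℕ) := by rw [h]
  rw [fwdFun_val ha σ i hi, fwdFun_val ha σ i' hi'] at hval
  apply Fin.ext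
  show i = i'
  by_cases hz : i = 0 <;> by_cases hz' : i' = 0
  · omega
  · exfalso
    have hb' : i' + 1 < m := by omega
    rw [apply_mk_congr' σ (h' := h0m) (if_pos hz),
      apply_mk_congr' σ (h' := hb') (if_neg hz'), h0] at hval
    have k1 := hne1 (i' + 1) hb' (by omega)
    have k0 := hne0 (i' + 1) hb' (by omega)
    unfold uval at hval; split_ifs at hval <;> omega
  · exfalso
    have hb : i + 1 < m := by omega
    rw [apply_mk_congr' σ (h' := hb) (if_neg hz),
      apply_mk_congr' σ (h' := h0m) (if_pos hz'), h0] at hval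
    have k1 := hne1 (i + 1) hb (by omega)
    have k0 := hne0 (i + 1) hb (by omega)
    unfold uval at hval; split_ifs at hval <;> omega
  · have hb : i + 1 < m := by omega
    have hb' : i' + 1 < m := by omega
    rw [apply_mk_congr' σ (h' := hb) (if_neg hz),
      apply_mk_congr' σ (h' := hb') (if_neg hz')] at hval
    have k1 := hne1 (i + 1) hb (by omega)
    have k1' := hne1 (i' + 1) hb' (by omega)
    have := uval_inj a _ _ k1 k1' hval
    have := apply_val_inj σ this
    omega

lemma bwd_inj (ha : a + 1 < m) (τ : Equiv.Perm (Fin (m - 1))) (h0m : (0:ℕ) < m - 1)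
    (ht0 : (τ ⟨0, h0m⟩ : ℕ) = a) :
    Function.Injective (bwdFun m a ha τ) := by
  have hne0 : ∀ (q : ℕ) (hq : q < m - 1), q ≠ 0 → (τ ⟨q, hq⟩ : ℕ) ≠ a := by
    intro q hq hq0 h
    exact hq0 (apply_val_inj τ (h.trans ht0.symm))
  rintro ⟨p, hp⟩ ⟨p', hp'⟩ h
  have hval : (bwdFun m a ha τ ⟨p, hp⟩ : ℕ) = (bwdFun m a ha τ ⟨p', hp'⟩ : ℕ) := by rw [h]
  apply Fin.ext
  show p = p'
  by_contra hne
  have hv : ∀ (q : ℕ) (hq2 : 2 ≤ q) (hqm : q < m), (bwdFun m a ha τ ⟨q, hqm⟩ : ℕ) ≠ a ∧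
      (bwdFun m a ha τ ⟨q, hqm⟩ : ℕ) ≠ a + 1 := by
    intro q hq2 hqm
    rw [bwdFun_val2 ha τ q hq2 hqm]
    constructor
    · intro hh
      have hq0 := hne0 (q - 1) (by omega) (by omega)
      unfold vval at hh; split_ifs at hh <;> omega
    · exact vval_ne a _
  rcases Nat.lt_or_ge p 2 with hp2 | hp2 <;> rcases Nat.lt_or_ge p' 2 with hp2' | hp2'
  · -- both < 2, distinct: values a vs a+1
    interval_cases p <;> interval_cases p'
    · exact hne rfl
    · rw [bwdFun_val0 ha τ hp, bwdFun_val1 ha τ hp'] at hval; omega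
    · rw [bwdFun_val1 ha τ hp, bwdFun_val0 ha τ hp'] at hval; omega
    · exact hne rfl
  · interval_cases p <;>
      [ (rw [bwdFun_val0 ha τ hp] at hval; exact (hv p' hp2' hp').1 hval.symm) ;
        (rw [bwdFun_val1 ha τ hp] at hval; exact (hv p' hp2' hp').2 hval.symm) ]
  · interval_cases p' <;>
      [ (rw [bwdFun_val0 ha τ hp'] at hval; exact (hv p hp2 hp).1 hval) ;
        (rw [bwdFun_val1 ha τ hp'] at hval; exact (hv p hp2 hp).2 hval) ]
  · rw [bwdFun_val2 ha τ p hp2 hp, bwdFun_val2 ha τ p' hp2' hp'] at hval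
    have : (τ ⟨p - 1, by omega⟩ : ℕ) = (τ ⟨p' - 1, by omega⟩ : ℕ) := by
      have := congrArg (uval a) hval
      rwa [uval_vval, uval_vval] at this
    have := apply_val_inj τ this
    omega

end Del
end EF

namespace EF
section Del2

variable {m a : ℕ}

lemma des_del (ha : a + 1 < m) (σ : Equiv.Perm (Fin m)) (τ : Equiv.Perm (Fin (m - 1)))
    (h0m : 0 < m) (h1m : 1 < m) (h0m' : 0 < m - 1)
    (h0 : (σ ⟨0, h0m⟩ : ℕ) = a) (h1 : (σ ⟨1, h1m⟩ : ℕ) = a + 1)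
    (ht0 : (τ ⟨0, h0m'⟩ : ℕ) = a)
    (hrel : ∀ (p : ℕ) (hp2 : 2 ≤ p) (hpm : p < m) (hq : p - 1 < m - 1),
      (σ ⟨p, hpm⟩ : ℕ) = vval a (τ ⟨p - 1, hq⟩)) :
    desNum m σ = desNum (m - 1) τ := by
  have hne0 : ∀ (q : ℕ) (hq : q < m - 1), q ≠ 0 → (τ ⟨q, hq⟩ : ℕ) ≠ a := by
    intro q hq hq0 h
    exact hq0 (apply_val_inj τ (h.trans ht0.symm))
  rw [desNum_eq_sum, desNum_eq_sum, sum_shift _ (show 2 ≤ m by omega),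
    show m - 1 - 1 = m - 2 from by omega]
  have hz : (if permWord m σ (0 + 1) < permWord m σ 0 then 1 else 0) = 0 := by
    rw [permWord_eq _ _ _ h1m, permWord_eq _ _ _ h0m, h0, h1]
    simp
  rw [hz, add_zero]
  apply Finset.sum_congr rfl
  intro i hi
  rw [Finset.mem_range] at hi
  have hi2 : i + 1 + 1 < m := by omega
  have hi1 : i + 1 < m := by omega
  have hj1 : i + 1 < m - 1 := by omega
  have hj0 : i < m - 1 := by omega
  rw [permWord_eq _ _ _ hi2, permWord_eq _ _ _ hi1,
    permWord_eq _ _ _ hj1, permWord_eq _ _ _ hj0]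
  have e2 := hrel (i + 1 + 1) (by omega) hi2 (by omega)
  rw [apply_mk_congr' τ (h' := hj1) (by omega)] at e2
  rw [e2]
  by_cases hiz : i = 0
  · subst hiz
    rw [apply_mk_congr' σ (h' := h1m) rfl, h1, apply_mk_congr' τ (h' := h0m') rfl, ht0]
    have k0 := hne0 (0 + 1) hj1 (by omega)
    unfold vval
    split_ifs <;> omega
  · have e1 := hrel (i + 1) (by omega) hi1 (by omega)
    rw [apply_mk_congr' τ (h' := hj0) (by omega)] at e1
    rw [e1]
    simp only [Nat.add_lt_add_iff_right, vval_lt_iff]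

lemma cntD_eq (ha : a + 1 < m) (e : ℕ) : cntD m e (a + 1) = cnt (m - 1) e (a + 1) := by
  classical
  have h0m : (0:ℕ) < m := by omega
  have h1m : (1:ℕ) < m := by omega
  have h0m' : (0:ℕ) < m - 1 := by omega
  unfold cntD cnt
  refine Finset.card_bij'
    (fun σ hσ => Equiv.ofBijective (fwdFun m a ha σ) ?_)
    (fun τ hτ => Equiv.ofBijective (bwdFun m a ha τ) ?_) ?_ ?_ ?_ ?_
  · rw [Finset.mem_filter] at hσ
    obtain ⟨-, hdes, hw0, hw1⟩ := hσ
    rw [permWord_eq_iff σ h0m a] at hw0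
    rw [permWord_eq_iff σ h1m (a + 1)] at hw1
    exact Finite.injective_iff_bijective.mp (fwd_inj ha σ h0m h1m hw0 hw1)
  · rw [Finset.mem_filter] at hτ
    obtain ⟨-, hdes, hw0⟩ := hτ
    rw [permWord_eq_iff τ h0m' a] at hw0
    exact Finite.injective_iff_bijective.mp (bwd_inj ha τ h0m' hw0)
  · intro σ hσ
    rw [Finset.mem_filter] at hσ
    obtain ⟨-, hdes, hw0, hw1⟩ := hσ
    rw [permWord_eq_iff σ h0m a] at hw0
    rw [permWord_eq_iff σ h1m (a + 1)] at hw1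
    have hne1 : ∀ (q : ℕ) (hq : q < m), q ≠ 1 → (σ ⟨q, hq⟩ : ℕ) ≠ a + 1 := by
      intro q hq hq1 h
      exact hq1 (apply_val_inj σ (h.trans hw1.symm))
    rw [Finset.mem_filter]
    have ht0 : ((Equiv.ofBijective (fwdFun m a ha σ)
        (Finite.injective_iff_bijective.mp (fwd_inj ha σ h0m h1m hw0 hw1))) ⟨0, h0m'⟩ : ℕ)
        = a := by
      simp only [Equiv.ofBijective_apply]
      rw [fwdFun_val ha σ 0 h0m', apply_mk_congr' σ (h' := h0m) (if_pos rfl), hw0]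
      unfold uval
      simp
    refine ⟨Finset.mem_univ _, ?_, ?_⟩
    · refine ((des_del ha σ _ h0m h1m h0m' hw0 hw1 ?_ ?_).symm).trans hdes
      · exact ht0
      · intro p hp2 hpm hq
        simp only [Equiv.ofBijective_apply]
        rw [fwdFun_val ha σ (p - 1) hq,
          apply_mk_congr' σ (h' := hpm) (show (if p - 1 = 0 then 0 else p - 1 + 1) = p by
            rw [if_neg (by omega)]; omega),
          vval_uval a _ (hne1 p hpm (by omega))]
    · rw [permWord_eq_iff _ h0m' a]
      exact ht0
  · intro τ hτ
    rw [Finset.mem_filter] at hτ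
    obtain ⟨-, hdes, hw0⟩ := hτ
    rw [permWord_eq_iff τ h0m' a] at hw0
    rw [Finset.mem_filter]
    refine ⟨Finset.mem_univ _, ?_, ?_, ?_⟩
    · refine (des_del ha _ τ h0m h1m h0m' ?_ ?_ hw0 ?_).trans hdes
      · simp only [Equiv.ofBijective_apply]
        exact bwdFun_val0 ha τ h0m
      · simp only [Equiv.ofBijective_apply]
        exact bwdFun_val1 ha τ h1m
      · intro p hp2 hpm hq
        simp only [Equiv.ofBijective_apply]
        rw [bwdFun_val2 ha τ p hp2 hpm, apply_mk_congr' τ (h' := hq) rfl]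
    · rw [permWord_eq_iff _ h0m a]
      simp only [Equiv.ofBijective_apply]
      exact bwdFun_val0 ha τ h0m
    · rw [permWord_eq_iff _ h1m (a + 1)]
      simp only [Equiv.ofBijective_apply]
      exact bwdFun_val1 ha τ h1m
  · intro σ hσ
    rw [Finset.mem_filter] at hσ
    obtain ⟨-, hdes, hw0, hw1⟩ := hσ
    rw [permWord_eq_iff σ h0m a] at hw0
    rw [permWord_eq_iff σ h1m (a + 1)] at hw1
    have hne1 : ∀ (q : ℕ) (hq : q < m), q ≠ 1 → (σ ⟨q, hq⟩ : ℕ) ≠ a + 1 := by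
      intro q hq hq1 h
      exact hq1 (apply_val_inj σ (h.trans hw1.symm))
    apply Equiv.ext
    rintro ⟨p, hp⟩
    apply Fin.ext
    simp only [Equiv.ofBijective_apply]
    by_cases hp0 : p = 0
    · subst hp0
      rw [bwdFun_val0 ha _ hp, apply_mk_congr' σ (h := hp) (h' := h0m) rfl, hw0]
    · by_cases hp1 : p = 1
      · subst hp1
        rw [bwdFun_val1 ha _ hp, apply_mk_congr' σ (h := hp) (h' := h1m) rfl, hw1]
      · rw [bwdFun_val2 ha _ p (by omega) hp]
        simp only [Equiv.ofBijective_apply]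
        rw [fwdFun_val ha σ (p - 1) (by omega),
          apply_mk_congr' σ (h' := hp) (show (if p - 1 = 0 then 0 else p - 1 + 1) = p by
            rw [if_neg (by omega)]; omega),
          vval_uval a _ (hne1 p hp (by omega))]
  · intro τ hτ
    rw [Finset.mem_filter] at hτ
    obtain ⟨-, hdes, hw0⟩ := hτ
    rw [permWord_eq_iff τ h0m' a] at hw0
    apply Equiv.ext
    rintro ⟨i, hi⟩
    apply Fin.ext
    simp only [Equiv.ofBijective_apply]
    rw [fwdFun_val ha _ i hi]
    by_cases hi0 : i = 0
    · subst hi0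
      rw [apply_mk_congr' _ (h' := h0m) (if_pos rfl)]
      simp only [Equiv.ofBijective_apply]
      rw [bwdFun_val0 ha τ h0m]
      rw [apply_mk_congr' τ (h := hi) (h' := h0m') rfl, hw0]
      unfold uval
      simp
    · rw [apply_mk_congr' _ (h' := (show i + 1 < m by omega)) (if_neg hi0)]
      simp only [Equiv.ofBijective_apply]
      rw [bwdFun_val2 ha τ (i + 1) (by omega) (by omega),
        apply_mk_congr' τ (h' := hi) (by omega), uval_vval]

end Del2
end EF

namespace EF

lemma key (m a D : ℕ) (ha : a + 1 < m) :
    cnt m D (a + 2) + cnt (m - 1) D (a + 1) = cnt m D (a + 1) + cntP m D (a + 1) := by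
  have h1 := cnt_eq_cntS ha D
  have h2 := cntS_split m D (a + 1)
  have h3 := cnt_split m D (a + 1)
  have h4 := cntD_eq ha D
  omega

end EF


namespace EF

lemma eulerian_eq_cnt (n d j : ℤ) (hn : 1 ≤ n) (hd : 0 ≤ d) (hj : 1 ≤ j) :
    eulerianFirst n d j = cnt n.toNat d.toNat j.toNat := by
  rw [eulerianFirst, if_pos ⟨hn, hd, hj⟩, Nat.card_eq_fintype_card, Fintype.card_subtype]
  rfl

end EF

/-- `A(n,d,j+1) = A(n,d,j) + A(n-1,d-1,j) - A(n-1,d,j)` as integers. -/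
theorem eulerianFirst_succ (n d j : ℤ) (hn : 2 ≤ n) (hj1 : 1 ≤ j) (hj2 : j ≤ n - 1)
    (hd1 : 0 ≤ d) (hd2 : d ≤ n - 1) :
    (eulerianFirst n d (j + 1) : ℤ) =
      (eulerianFirst n d j : ℤ) + (eulerianFirst (n - 1) (d - 1) j : ℤ) -
        (eulerianFirst (n - 1) d j : ℤ) := by
  have ha : (j.toNat - 1) + 1 < n.toNat := by omega
  have e1 : eulerianFirst n d (j + 1) = EF.cnt n.toNat d.toNat ((j.toNat - 1) + 2) := by
    rw [EF.eulerian_eq_cnt n d (j + 1) (by omega) hd1 (by omega),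
      show (j + 1).toNat = (j.toNat - 1) + 2 from by omega]
  have e2 : eulerianFirst n d j = EF.cnt n.toNat d.toNat ((j.toNat - 1) + 1) := by
    rw [EF.eulerian_eq_cnt n d j (by omega) hd1 hj1]
    congr 1
    omega
  have e4 : eulerianFirst (n - 1) d j = EF.cnt (n.toNat - 1) d.toNat ((j.toNat - 1) + 1) := by
    rw [EF.eulerian_eq_cnt (n - 1) d j (by omega) hd1 hj1]
    congr 1 <;> omega
  have hkey := EF.key n.toNat (j.toNat - 1) d.toNat ha
  rcases eq_or_lt_of_le hd1 with hd0 | hdpos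
  · -- d = 0
    have hd0' : d = 0 := hd0.symm
    have e3 : eulerianFirst (n - 1) (d - 1) j = 0 := by
      rw [eulerianFirst, if_neg (by omega)]
    have hp : EF.cntP n.toNat d.toNat ((j.toNat - 1) + 1) = 0 := by
      rw [show d.toNat = 0 from by omega]
      exact EF.cntP_zero _ _
    rw [e1, e2, e3, e4]
    omega
  · -- d ≥ 1
    have e3 : eulerianFirst (n - 1) (d - 1) j
        = EF.cnt (n.toNat - 1) (d.toNat - 1) ((j.toNat - 1) + 1) := by
      rw [EF.eulerian_eq_cnt (n - 1) (d - 1) j (by omega) (by omega) hj1]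
      congr 1 <;> omega
    have hp : EF.cntP n.toNat d.toNat ((j.toNat - 1) + 1)
        = EF.cnt (n.toNat - 1) (d.toNat - 1) ((j.toNat - 1) + 1) := by
      obtain ⟨E, hE⟩ : ∃ E, d.toNat = E + 1 := ⟨d.toNat - 1, by omega⟩
      rw [hE, EF.cntP_succ, EF.cntD_eq ha, Nat.add_sub_cancel]
    rw [e1, e2, e3, e4]
    omega
end

section
/- In the ring of formal power series in x,y with coefficients in ℚ[t], the series A(t,x,y) := Σ_{n≥1} Σ_{d,j} A(n,d,j) t^d x^n y^j/((j−1)!(n−j)!) satisfies A(t,x,y) · ( t·1 − e^{(t−1)x(1+y)} ) = (t−1) · x y · e^{(t−1)xy}. -/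
/-- Formal power series in commuting variables `x` (index 0) and `y` (index 1)
with coefficients in `ℚ[t]`. -/
abbrev PS2 : Type := MvPowerSeries (Fin 2) (Polynomial ℚ)

/-- `e^{c·x(1+y)}`: the series whose coefficient of `x^n y^j` is `c^n·binom(n,j)/n!`. -/
noncomputable def expX1Y (c : Polynomial ℚ) : PS2 := fun e =>
  ((e 0).factorial : ℚ)⁻¹ • (c ^ (e 0) * ((e 0).choose (e 1) : Polynomial ℚ))

/-- `e^{c·xy}`: the series whose coefficient of `x^k y^k` is `c^k/k!`
(all other coefficients `0`). -/
noncomputable def expXY (c : Polynomial ℚ) : PS2 := fun e =>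
  if e 0 = e 1 then ((e 0).factorial : ℚ)⁻¹ • c ^ (e 0) else 0

/-- `A(t,x,y) = Σ_{n≥1} Σ_{d,j} A(n,d,j) t^d x^n y^j/((j-1)!(n-j)!)`. -/
noncomputable def AGF : PS2 := fun e =>
  (((e 1 - 1).factorial * (e 0 - e 1).factorial : ℕ) : ℚ)⁻¹ •
    ∑ d ∈ Finset.range (e 0 + 1),
      (eulerianFirst (e 0) d (e 1) : Polynomial ℚ) * Polynomial.X ^ d

/-!
Deleting the first letter `j + 1` of a permutation of `[m + 2]` and standardizing leaves a
permutation `σ` of `[m + 1]`; the first position is a descent iff `σ` starts with a letter `≤ j`.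
So the first-letter refinements `F(n, j) = ∑_{π₁ = j} t ^ des π` of the Eulerian polynomials `E_m`
satisfy `F(m+2, j+2) = F(m+2, j+1) + (t - 1) F(m+1, j+1)`, which solves to
`F(m+1, j+1) = ∑_i C(j, i) (t - 1)^i E_{m-i}`. Summing over `j` gives
`t E_{m+1} = ∑_s C(m+1, s) (t - 1)^s E_{m+1-s}`, i.e. `E(u) (t - e^{(t-1)u}) = t - 1` for the
exponential generating function `E(u) = ∑ E_m u^m / m!`. The closed form of `F` says precisely that
`A(t,x,y) = xy e^{(t-1)xy} E(x(1+y))`, so substituting `u = x(1+y)` proves the theorem.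
-/

open Finset
open scoped Nat

lemma sum_range_choose_eq_choose_succ (m i : ℕ) :
    ∑ j ∈ range m, j.choose i = m.choose (i + 1) := by
  induction m with
  | zero => simp
  | succ m ih => rw [sum_range_succ, ih, Nat.choose_succ_succ', add_comm]

lemma inv_factorial_mul_choose {n k : ℕ} (hk : k ≤ n) :
    (n ! : ℚ)⁻¹ * n.choose k = (k ! : ℚ)⁻¹ * ((n - k)! : ℚ)⁻¹ := by
  rw [Nat.cast_choose ℚ hk]
  field_simp

section EulerianPolynomials

open Polynomial Equiv

section PermCons

variable {m : ℕ}

def permCons (p : Fin (m + 1)) (σ : Perm (Fin m)) : Perm (Fin (m + 1)) :=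
  (finSuccEquiv' 0).trans (σ.optionCongr.trans (finSuccEquiv' p).symm)

@[simp] lemma permCons_zero (p : Fin (m + 1)) (σ : Perm (Fin m)) : permCons p σ 0 = p := by
  simp [permCons, finSuccEquiv'_at]

@[simp] lemma permCons_succ (p : Fin (m + 1)) (σ : Perm (Fin m)) (i : Fin m) :
    permCons p σ i.succ = p.succAbove (σ i) := by
  have h : finSuccEquiv' (0 : Fin (m + 1)) i.succ = some i := by
    rw [← Fin.zero_succAbove, finSuccEquiv'_succAbove]
  simp [permCons, h]

lemma permCons_bijective :
    Function.Bijective fun q : Fin (m + 1) × Perm (Fin m) => permCons q.1 q.2 := by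
  rw [Fintype.bijective_iff_injective_and_card]
  refine ⟨fun ⟨p, σ⟩ ⟨q, τ⟩ h => ?_, by simp [Fintype.card_perm, Nat.factorial_succ]⟩
  have hp : p = q := by simpa using congrArg (· 0) h
  subst hp
  have hσ : σ = τ := Equiv.ext fun i => by simpa using congrArg (· i.succ) h
  rw [hσ]

end PermCons

section Descents

variable {n : ℕ}

lemma permWord_lt_permWord_iff (π : Perm (Fin n)) {i j : ℕ} (hi : i < n) (hj : j < n) :
    permWord n π i < permWord n π j ↔ π ⟨i, hi⟩ < π ⟨j, hj⟩ := by
  simp only [permWord, dif_pos hi, dif_pos hj, Fin.lt_def]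
  omega

lemma permWord_zero (π : Perm (Fin (n + 1))) : permWord (n + 1) π 0 = π 0 + 1 :=
  dif_pos n.succ_pos

lemma desNum_lt_succ (π : Perm (Fin n)) : desNum n π < n + 1 :=
  ((card_filter_le _ _).trans (card_range _).le).trans_lt (by omega)

lemma desNum_permCons (p : Fin (n + 2)) (σ : Perm (Fin (n + 1))) :
    desNum (n + 2) (permCons p σ) = desNum (n + 1) σ + if (σ 0 : ℕ) < p then 1 else 0 := by
  have succ_eq : ∀ l (hl : l < n + 1), (⟨l + 1, by omega⟩ : Fin (n + 2)) = Fin.succ ⟨l, hl⟩ :=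
    fun _ _ => rfl
  simp only [desNum, card_filter]
  rw [show n + 2 - 1 = n + 1 from rfl, sum_range_succ', add_tsub_cancel_right]
  congr 1
  · refine sum_congr rfl fun i hi => if_congr ?_ rfl rfl
    rw [mem_range] at hi
    rw [permWord_lt_permWord_iff _ (by omega) (by omega),
      permWord_lt_permWord_iff _ (by omega) (by omega), succ_eq (i + 1) (by omega),
      succ_eq i (by omega), permCons_succ, permCons_succ, Fin.succAbove_lt_succAbove_iff]
  · refine if_congr ?_ rfl rfl
    rw [permWord_lt_permWord_iff _ (by omega) (by omega), succ_eq 0 (by omega),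
      show (⟨0, _⟩ : Fin (n + 2)) = 0 from rfl, permCons_succ, permCons_zero,
      Fin.succAbove_lt_iff_castSucc_lt, Fin.lt_def]
    rfl

end Descents

section EulerPoly

noncomputable def eulerPoly (m : ℕ) : ℚ[X] := ∑ σ : Perm (Fin m), X ^ desNum m σ

noncomputable def firstLetterPoly (n j : ℕ) : ℚ[X] :=
  ∑ π : Perm (Fin n) with permWord n π 0 = j, X ^ desNum n π

lemma firstLetterPoly_eq_sum_tail {m j : ℕ} (hj : j ≤ m + 1) :
    firstLetterPoly (m + 2) (j + 1) =
      ∑ σ : Perm (Fin (m + 1)), X ^ (desNum (m + 1) σ + if (σ 0 : ℕ) < j then 1 else 0) := by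
  rw [firstLetterPoly, sum_filter, ← Fintype.sum_bijective _ permCons_bijective _ _ fun _ => rfl,
    Fintype.sum_prod_type, sum_eq_single (⟨j, by omega⟩ : Fin (m + 2))]
  · simp [permWord_zero, desNum_permCons]
  · intro p _ hp
    refine sum_eq_zero fun σ _ => if_neg ?_
    rw [permWord_zero, permCons_zero]
    exact fun h => hp (Fin.ext (by simpa using h))
  · simp

lemma firstLetterPoly_one (m : ℕ) : firstLetterPoly (m + 1) 1 = eulerPoly m := by
  cases m with
  | zero => simp [firstLetterPoly, eulerPoly, desNum, permWord]
  | succ m => simp [firstLetterPoly_eq_sum_tail, eulerPoly]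

lemma firstLetterPoly_eq_sum_ite (n j : ℕ) :
    firstLetterPoly (n + 1) (j + 1) =
      ∑ σ : Perm (Fin (n + 1)), if (σ 0 : ℕ) = j then X ^ desNum (n + 1) σ else 0 := by
  simp [firstLetterPoly, sum_filter, permWord_zero]

lemma firstLetterPoly_succ_succ {m j : ℕ} (hj : j ≤ m) :
    firstLetterPoly (m + 2) (j + 2) =
      firstLetterPoly (m + 2) (j + 1) + (X - 1) * firstLetterPoly (m + 1) (j + 1) := by
  rw [firstLetterPoly_eq_sum_tail (by omega), firstLetterPoly_eq_sum_tail (by omega),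
    firstLetterPoly_eq_sum_ite, mul_sum, ← sum_add_distrib]
  refine sum_congr rfl fun σ _ => ?_
  rcases lt_trichotomy (σ 0 : ℕ) j with h | h | h
  · simp [h, h.ne, Nat.lt_succ_of_lt h]
  · simp only [h, lt_add_iff_pos_right, zero_lt_one, if_true, lt_irrefl, if_false]
    ring
  · have h' : ¬ (σ 0 : ℕ) < j + 1 := by omega
    simp [h', h.ne', h.not_gt]

lemma firstLetterPoly_eq_sum_choose {m j : ℕ} (hj : j ≤ m) :
    firstLetterPoly (m + 1) (j + 1) =
      ∑ i ∈ range (j + 1), (j.choose i : ℚ[X]) * ((X - 1) ^ i * eulerPoly (m - i)) := by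
  induction j generalizing m with
  | zero => simp [firstLetterPoly_one]
  | succ j ih =>
    obtain ⟨m, rfl⟩ : ∃ m', m = m' + 1 := ⟨m - 1, by omega⟩
    rw [firstLetterPoly_succ_succ (by omega), ih (by omega), ih (by omega), mul_sum]
    convert (sum_choose_succ_mul (fun i l => (X - 1) ^ i * eulerPoly (m - j + l)) j).symm
      using 2 with i hi
    · refine sum_congr rfl fun i hi => ?_
      rw [show m - j + (j + 1 - i) = m + 1 - i by rw [mem_range] at hi; omega]
    · refine sum_congr rfl fun i hi => ?_
      rw [show m - j + (j - i) = m - i by rw [mem_range] at hi; omega]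
      ring
    · rw [show m - j + (j + 1 - i) = m + 1 - i by rw [mem_range] at hi; omega]

lemma firstLetterPoly_eq_zero_of_lt {m j : ℕ} (h : m < j) :
    firstLetterPoly (m + 1) (j + 1) = 0 := by
  rw [firstLetterPoly_eq_sum_ite]
  exact sum_eq_zero fun σ _ => if_neg (by have := (σ 0).isLt; omega)

lemma eulerPoly_eq_sum_firstLetterPoly (m : ℕ) :
    eulerPoly (m + 1) = ∑ j ∈ range (m + 1), firstLetterPoly (m + 1) (j + 1) := by
  simp only [firstLetterPoly_eq_sum_ite]
  rw [sum_comm, eulerPoly]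
  exact sum_congr rfl fun σ _ => by simp [Fin.is_le]

lemma eulerPoly_succ (m : ℕ) :
    eulerPoly (m + 1) =
      ∑ i ∈ range (m + 1), ((m + 1).choose (i + 1) : ℚ[X]) * ((X - 1) ^ i * eulerPoly (m - i)) := by
  have extend : ∀ j ∈ range (m + 1), firstLetterPoly (m + 1) (j + 1) =
      ∑ i ∈ range (m + 1), (j.choose i : ℚ[X]) * ((X - 1) ^ i * eulerPoly (m - i)) := by
    intro j hj
    rw [mem_range] at hj
    rw [firstLetterPoly_eq_sum_choose (by omega)]
    refine sum_subset (range_subset_range.2 (by omega)) fun i _ hi => ?_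
    rw [mem_range, not_lt] at hi
    simp [Nat.choose_eq_zero_of_lt (Nat.lt_of_succ_le hi)]
  rw [eulerPoly_eq_sum_firstLetterPoly, sum_congr rfl extend, sum_comm]
  refine sum_congr rfl fun i _ => ?_
  rw [← sum_mul, ← Nat.cast_sum, sum_range_choose_eq_choose_succ]

lemma X_mul_eulerPoly_succ (m : ℕ) :
    X * eulerPoly (m + 1) =
      ∑ i ∈ range (m + 2), ((m + 1).choose i : ℚ[X]) * ((X - 1) ^ i * eulerPoly (m + 1 - i)) := by
  rw [sum_range_succ']
  calc X * eulerPoly (m + 1) = (X - 1) * eulerPoly (m + 1) + eulerPoly (m + 1) := by ring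
    _ = _ := by
      congr 1
      · rw [eulerPoly_succ m, mul_sum]
        refine sum_congr rfl fun i _ => ?_
        rw [Nat.add_sub_add_right]
        ring
      · simp

lemma eulerianFirst_eq_card {n j : ℕ} (hn : 1 ≤ n) (hj : 1 ≤ j) (d : ℕ) :
    eulerianFirst n d j = #{π : Perm (Fin n) | desNum n π = d ∧ permWord n π 0 = j} := by
  rw [eulerianFirst, if_pos ⟨by exact_mod_cast hn, by positivity, by exact_mod_cast hj⟩]
  simp only [Int.toNat_natCast, Nat.card_eq_fintype_card, Fintype.card_subtype]

lemma sum_eulerianFirst_mul_X_pow {n j : ℕ} (hn : 1 ≤ n) (hj : 1 ≤ j) :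
    ∑ d ∈ range (n + 1), (eulerianFirst n d j : ℚ[X]) * X ^ d = firstLetterPoly n j := by
  rw [firstLetterPoly, ← sum_fiberwise_of_maps_to fun π _ => mem_range.2 (desNum_lt_succ π)]
  refine sum_congr rfl fun d _ => ?_
  rw [sum_congr rfl fun π hπ => by rw [(mem_filter.1 hπ).2], sum_const, nsmul_eq_mul,
    eulerianFirst_eq_card hn hj, filter_filter]
  simp_rw [and_comm]

end EulerPoly

section EGF

open PowerSeries (coeff rescale exp)

noncomputable def eulerEGF : PowerSeries ℚ[X] := PowerSeries.mk fun n => (n ! : ℚ)⁻¹ • eulerPoly n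

lemma eulerEGF_mul_sub_rescale_exp :
    eulerEGF * (PowerSeries.C X - rescale (X - 1) (exp ℚ[X])) = PowerSeries.C (X - 1) := by
  refine PowerSeries.ext fun n => ?_
  rw [mul_sub, map_sub, PowerSeries.coeff_mul_C, mul_comm eulerEGF, PowerSeries.coeff_mul,
    Nat.sum_antidiagonal_eq_sum_range_succ
      (fun a b => coeff a (rescale (X - 1) (exp ℚ[X])) * coeff b eulerEGF),
    PowerSeries.coeff_C]
  cases n with
  | zero => simp [eulerEGF, eulerPoly, desNum]
  | succ m =>
    rw [if_neg m.succ_ne_zero, sub_eq_zero, eulerEGF, PowerSeries.coeff_mk, smul_mul_assoc,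
      mul_comm, X_mul_eulerPoly_succ, smul_sum]
    refine sum_congr rfl fun k hk => ?_
    have hc := congrArg Polynomial.C
      (inv_factorial_mul_choose (Nat.lt_succ_iff.1 (mem_range.1 hk)))
    simp only [PowerSeries.coeff_rescale, PowerSeries.coeff_exp, PowerSeries.coeff_mk,
      smul_eq_C_mul, Polynomial.algebraMap_eq, map_mul, map_natCast, one_div] at hc ⊢
    linear_combination ((X - 1) ^ k * eulerPoly (m + 1 - k)) * hc

end EGF

end EulerianPolynomials

section BivariateSubst

open MvPowerSeries

variable {R : Type*} [CommRing R]

noncomputable def bidegree (a b : ℕ) : Fin 2 →₀ ℕ := Finsupp.single 0 a + Finsupp.single 1 b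

@[simp] lemma bidegree_apply_zero (a b : ℕ) : bidegree a b 0 = a := by simp [bidegree]
@[simp] lemma bidegree_apply_one (a b : ℕ) : bidegree a b 1 = b := by simp [bidegree]

lemma eq_bidegree_iff {e : Fin 2 →₀ ℕ} {a b : ℕ} : e = bidegree a b ↔ e 0 = a ∧ e 1 = b := by
  refine ⟨by rintro rfl; simp, fun ⟨ha, hb⟩ => ?_⟩
  ext i; fin_cases i <;> simp [ha, hb]

noncomputable def substXY : PowerSeries R →ₐ[R] MvPowerSeries (Fin 2) R :=
  PowerSeries.substAlgHom (a := X 0 * X 1) (.of_constantCoeff_zero (by simp))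

noncomputable def substX1Y : PowerSeries R →ₐ[R] MvPowerSeries (Fin 2) R :=
  PowerSeries.substAlgHom (a := X 0 * (1 + X 1)) (.of_constantCoeff_zero (by simp))

lemma X_zero_mul_X_one_pow (d : ℕ) :
    (X 0 * X 1 : MvPowerSeries (Fin 2) R) ^ d = monomial (bidegree d d) 1 := by
  rw [mul_pow, X_pow_eq, X_pow_eq, monomial_mul_monomial, one_mul, bidegree]

lemma X_zero_mul_one_add_X_one_pow (d : ℕ) :
    (X 0 * (1 + X 1) : MvPowerSeries (Fin 2) R) ^ d =
      ∑ k ∈ range (d + 1), monomial (bidegree d k) (d.choose k : R) := by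
  rw [mul_pow, add_comm, add_pow, mul_sum]
  refine sum_congr rfl fun k _ => ?_
  rw [one_pow, mul_one, X_pow_eq, X_pow_eq, ← map_natCast (C (σ := Fin 2)),
    ← monomial_zero_eq_C_apply, monomial_mul_monomial, monomial_mul_monomial, one_mul, one_mul,
    add_zero, bidegree]

lemma coeff_substXY (g : PowerSeries R) (e : Fin 2 →₀ ℕ) :
    coeff e (substXY g) = if e 0 = e 1 then PowerSeries.coeff (e 0) g else 0 := by
  rw [substXY, PowerSeries.coe_substAlgHom,
    PowerSeries.coeff_subst (.of_constantCoeff_zero (by simp)), finsum_eq_single _ (e 0)]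
  · simp [X_zero_mul_X_one_pow, coeff_monomial, eq_bidegree_iff, eq_comm]
  · intro d hd
    simp [X_zero_mul_X_one_pow, coeff_monomial, eq_bidegree_iff, Ne.symm hd]

lemma coeff_substX1Y (f : PowerSeries R) (e : Fin 2 →₀ ℕ) :
    coeff e (substX1Y f) = (e 0).choose (e 1) * PowerSeries.coeff (e 0) f := by
  rw [substX1Y, PowerSeries.coe_substAlgHom,
    PowerSeries.coeff_subst (.of_constantCoeff_zero (by simp)), finsum_eq_single _ (e 0)]
  · rw [X_zero_mul_one_add_X_one_pow, map_sum, sum_eq_single (e 1)]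
    · simp [coeff_monomial, eq_bidegree_iff, mul_comm]
    · intro k _ hk
      simp [coeff_monomial, eq_bidegree_iff, Ne.symm hk]
    · intro hk
      simp [Nat.choose_eq_zero_of_lt (not_le.mp (mt Nat.lt_succ_of_le (mem_range.not.mp hk)))]
  · intro d hd
    simp [X_zero_mul_one_add_X_one_pow, coeff_monomial, eq_bidegree_iff, Ne.symm hd]

lemma substX1Y_C (r : R) : substX1Y (PowerSeries.C r) = C r := by
  rw [substX1Y, PowerSeries.coe_substAlgHom, PowerSeries.subst_C]

lemma coeff_substXY_mul (g : PowerSeries R) (H : MvPowerSeries (Fin 2) R) (m k : ℕ) :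
    coeff (bidegree m k) (substXY g * H) =
      ∑ i ∈ range (min m k + 1), PowerSeries.coeff i g * coeff (bidegree (m - i) (k - i)) H := by
  have mem_antidiagonal_iff : ∀ p : (Fin 2 →₀ ℕ) × (Fin 2 →₀ ℕ),
      p ∈ antidiagonal (bidegree m k) ↔
        p.2 = bidegree (m - p.1 0) (k - p.1 1) ∧ p.1 0 ≤ m ∧ p.1 1 ≤ k := by
    rintro ⟨p, q⟩
    simp only [HasAntidiagonal.mem_antidiagonal, eq_bidegree_iff, Finsupp.coe_add, Pi.add_apply]
    omega
  symm
  calc ∑ i ∈ range (min m k + 1), PowerSeries.coeff i g * coeff (bidegree (m - i) (k - i)) H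
      = ∑ i ∈ range (min m k + 1),
          coeff (bidegree i i) (substXY g) * coeff (bidegree (m - i) (k - i)) H := by
        simp [coeff_substXY]
    _ = ∑ p ∈ (range (min m k + 1)).image fun i => (bidegree i i, bidegree (m - i) (k - i)),
          coeff p.1 (substXY g) * coeff p.2 H := by
        rw [sum_image]
        intro i _ j _ hij
        simpa using congrArg (fun p => p.1 0) hij
    _ = ∑ p ∈ antidiagonal (bidegree m k), coeff p.1 (substXY g) * coeff p.2 H := by
        apply sum_subset
        · intro p hp
          obtain ⟨i, hi, rfl⟩ := mem_image.1 hp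
          rw [mem_range] at hi
          rw [mem_antidiagonal_iff]
          simp only [bidegree_apply_zero, bidegree_apply_one]
          exact ⟨trivial, by omega, by omega⟩
        · intro p hp hp_not_diag
          obtain ⟨hp2, hm, hk⟩ := (mem_antidiagonal_iff p).1 hp
          simp only [coeff_substXY, ite_mul, zero_mul, ite_eq_right_iff]
          intro hdiag
          refine absurd (mem_image.2 ⟨p.1 0, mem_range.2 (by omega), ?_⟩) hp_not_diag
          rw [Prod.ext_iff, eq_comm, eq_bidegree_iff, hp2]
          simp [hdiag]
    _ = _ := (coeff_mul _ _ _).symm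

lemma coeff_X_zero_mul_X_one_mul (G : MvPowerSeries (Fin 2) R) (m k : ℕ) :
    coeff (bidegree (m + 1) (k + 1)) (X 0 * X 1 * G) = coeff (bidegree m k) G := by
  have hsub : bidegree (m + 1) (k + 1) - bidegree 1 1 = bidegree m k := by
    rw [eq_bidegree_iff]; simp
  rw [← pow_one (X 0 * X 1), X_zero_mul_X_one_pow, coeff_monomial_mul, one_mul, if_pos, hsub]
  intro i; fin_cases i <;> simp

lemma coeff_X_zero_mul_X_one_mul_eq_zero (G : MvPowerSeries (Fin 2) R) {e : Fin 2 →₀ ℕ}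
    (h : e 0 = 0 ∨ e 1 = 0) : coeff e (X 0 * X 1 * G) = 0 := by
  rw [← pow_one (X 0 * X 1), X_zero_mul_X_one_pow, coeff_monomial_mul, if_neg]
  intro hle
  have h0 := hle 0
  have h1 := hle 1
  simp only [bidegree_apply_zero, bidegree_apply_one] at h0 h1
  omega

end BivariateSubst

section GeneratingFunction

open MvPowerSeries

lemma coeff_AGF_eq_zero {e : Fin 2 →₀ ℕ} (h : e 0 = 0 ∨ e 1 = 0) : coeff e AGF = 0 := by
  rw [coeff_apply, AGF]
  refine smul_eq_zero_of_right _ (sum_eq_zero fun d _ => ?_)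
  rw [eulerianFirst, if_neg (by omega), Nat.cast_zero, zero_mul]

lemma coeff_AGF (m k : ℕ) :
    coeff (bidegree (m + 1) (k + 1)) AGF =
      ((k ! * (m - k)! : ℕ) : ℚ)⁻¹ • firstLetterPoly (m + 1) (k + 1) := by
  rw [coeff_apply, AGF, bidegree_apply_zero, bidegree_apply_one,
    sum_eulerianFirst_mul_X_pow (by omega) (by omega), Nat.add_sub_cancel, Nat.add_sub_add_right]

lemma coeff_substXY_exp_mul_substX1Y_eulerEGF (m k : ℕ) :
    coeff (bidegree m k)
      (substXY (PowerSeries.rescale (Polynomial.X - 1) (PowerSeries.exp (Polynomial ℚ))) *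
        substX1Y eulerEGF) =
      ((k ! * (m - k)! : ℕ) : ℚ)⁻¹ • firstLetterPoly (m + 1) (k + 1) := by
  simp only [coeff_substXY_mul, coeff_substX1Y, bidegree_apply_zero, bidegree_apply_one,
    PowerSeries.coeff_rescale, PowerSeries.coeff_exp, eulerEGF, PowerSeries.coeff_mk]
  rcases le_or_gt k m with hkm | hmk
  · rw [min_eq_right hkm, firstLetterPoly_eq_sum_choose hkm, smul_sum]
    refine sum_congr rfl fun i hi => ?_
    rw [mem_range] at hi
    have h1 := inv_factorial_mul_choose (Nat.lt_succ_iff.1 hi)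
    have h2 := inv_factorial_mul_choose (n := m - i) (k := k - i) (by omega)
    rw [show m - i - (k - i) = m - k by omega] at h2
    have hc : (i ! : ℚ)⁻¹ * (((m - i).choose (k - i) : ℚ) * ((m - i)! : ℚ)⁻¹) =
        ((k ! * (m - k)! : ℕ) : ℚ)⁻¹ * k.choose i := by
      push_cast
      linear_combination (i ! : ℚ)⁻¹ * h2 - ((m - k)! : ℚ)⁻¹ * h1
    have hC := congrArg Polynomial.C hc
    simp only [Polynomial.algebraMap_eq, Polynomial.smul_eq_C_mul, one_div, map_mul,
      map_natCast] at hC ⊢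
    linear_combination ((Polynomial.X - 1) ^ i * eulerPoly (m - i)) * hC
  · rw [firstLetterPoly_eq_zero_of_lt hmk, smul_zero]
    refine sum_eq_zero fun i hi => ?_
    rw [mem_range] at hi
    rw [Nat.choose_eq_zero_of_lt (by omega), Nat.cast_zero, zero_mul, mul_zero]

lemma AGF_eq_X_mul_X_mul_substXY_mul_substX1Y :
    AGF = X 0 * X 1 *
      (substXY (PowerSeries.rescale (Polynomial.X - 1) (PowerSeries.exp (Polynomial ℚ))) *
        substX1Y eulerEGF) := by
  refine MvPowerSeries.ext fun e => ?_
  by_cases h : e 0 = 0 ∨ e 1 = 0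
  · rw [coeff_AGF_eq_zero h, coeff_X_zero_mul_X_one_mul_eq_zero _ h]
  · obtain ⟨m, k, rfl⟩ : ∃ m k, e = bidegree (m + 1) (k + 1) :=
      ⟨e 0 - 1, e 1 - 1, eq_bidegree_iff.2 ⟨by omega, by omega⟩⟩
    rw [coeff_X_zero_mul_X_one_mul, coeff_AGF, coeff_substXY_exp_mul_substX1Y_eulerEGF]

lemma expX1Y_eq_substX1Y (c : Polynomial ℚ) :
    expX1Y c = substX1Y (PowerSeries.rescale c (PowerSeries.exp (Polynomial ℚ))) := by
  refine MvPowerSeries.ext fun e => ?_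
  rw [coeff_substX1Y, PowerSeries.coeff_rescale, PowerSeries.coeff_exp, coeff_apply, expX1Y]
  simp only [Polynomial.algebraMap_eq, Polynomial.smul_eq_C_mul, one_div]
  ring

lemma expXY_eq_substXY (c : Polynomial ℚ) :
    expXY c = substXY (PowerSeries.rescale c (PowerSeries.exp (Polynomial ℚ))) := by
  refine MvPowerSeries.ext fun e => ?_
  rw [coeff_substXY, PowerSeries.coeff_rescale, PowerSeries.coeff_exp, coeff_apply, expXY]
  simp only [Polynomial.algebraMap_eq, Polynomial.smul_eq_C_mul, one_div]
  split_ifs <;> ring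

end GeneratingFunction

/-- `A(t,x,y)·(t·1 - e^{(t-1)x(1+y)}) = (t-1)·xy·e^{(t-1)xy}`. -/
theorem AGF_eq :
    AGF * (MvPowerSeries.C (σ := Fin 2) (R := Polynomial ℚ) Polynomial.X * 1 -
        expX1Y (Polynomial.X - 1)) =
      MvPowerSeries.C (σ := Fin 2) (R := Polynomial ℚ) (Polynomial.X - 1) *
        MvPowerSeries.X 0 * MvPowerSeries.X 1 * expXY (Polynomial.X - 1) := by
  set E := PowerSeries.rescale (Polynomial.X - 1) (PowerSeries.exp (Polynomial ℚ))
  have key : substX1Y eulerEGF * (MvPowerSeries.C Polynomial.X - substX1Y E) =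
      MvPowerSeries.C (Polynomial.X - 1) := by
    rw [← substX1Y_C, ← map_sub, ← map_mul, eulerEGF_mul_sub_rescale_exp, substX1Y_C]
  rw [AGF_eq_X_mul_X_mul_substXY_mul_substX1Y, expX1Y_eq_substX1Y, expXY_eq_substXY]
  linear_combination (MvPowerSeries.X 0 * MvPowerSeries.X 1 * substXY E) * key
end

section
/- For every odd integer n ≥ 3 and every integer d with 0 ≤ d ≤ (n−1)/2, the number of cyclic permutations of [n] (permutations of [n] consisting of a single n-cycle) c with min(cdes(c), casc(c)) = d equals 2·A(n−1, d−1). -/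
/-- Eulerian number `A(n,d)` (with `A(0,0) = 1`, and `0` for negative arguments). -/
noncomputable def eulerian (n d : ℤ) : ℕ :=
  if 0 ≤ n ∧ 0 ≤ d then
    Nat.card {π : Equiv.Perm (Fin n.toNat) // desNum n.toNat π = d.toNat}
  else 0

/-- Cyclic descent number: the number of points `x` with `c x < x`. -/
def cdes {n : ℕ} (c : Equiv.Perm (Fin n)) : ℕ :=
  (Finset.univ.filter (fun x : Fin n => c x < x)).card

/-- Cyclic ascent number: the number of points `x` with `x < c x`. -/
def casc {n : ℕ} (c : Equiv.Perm (Fin n)) : ℕ :=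
  (Finset.univ.filter (fun x : Fin n => x < c x)).card

open Equiv Equiv.Perm Finset

lemma cdes_inv {n : ℕ} (c : Perm (Fin n)) : cdes c⁻¹ = casc c :=
  card_equiv (Equiv.symm c) fun x => by simp

lemma cdes_add_casc {n : ℕ} {c : Perm (Fin n)} (hc : ∀ x, c x ≠ x) : cdes c + casc c = n := by
  have hasc : univ.filter (fun x => x < c x) = univ.filter fun x => ¬c x < x :=
    filter_congr fun x _ => ⟨fun h => h.not_gt, fun h => (hc x).lt_or_gt.resolve_left h⟩
  rw [cdes, casc, hasc, card_filter_add_card_filter_not, card_univ, Fintype.card_fin]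

lemma cdes_pos {n : ℕ} {c : Perm (Fin (n + 1))} (hc : c (Fin.last n) ≠ Fin.last n) :
    0 < cdes c :=
  card_pos.2 ⟨Fin.last n, mem_filter.2 ⟨mem_univ _, (Fin.le_last _).lt_of_ne hc⟩⟩

lemma cdes_mul_mul_inv {n : ℕ} (w σ : Perm (Fin n)) :
    cdes (w * σ * w⁻¹) = #{j | w (σ j) < w j} :=
  card_equiv (Equiv.symm w) fun x => by
    rw [mem_filter, mem_filter]; simp [Perm.inv_def]

lemma desNum_succ {k : ℕ} (π : Perm (Fin (k + 1))) :
    desNum (k + 1) π = #{i : Fin k | π i.succ < π i.castSucc} := by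
  rw [desNum, Nat.add_sub_cancel, card_filter, card_filter, ← Fin.sum_univ_eq_sum_range]
  refine sum_congr rfl fun i _ => ?_
  have h₁ : permWord (k + 1) π (i + 1) = π i.succ + 1 := dif_pos (Nat.succ_lt_succ i.isLt)
  have h₀ : permWord (k + 1) π i = π i.castSucc + 1 := dif_pos (Nat.lt_succ_of_lt i.isLt)
  simp only [h₁, h₀, Nat.add_lt_add_iff_right, Fin.val_fin_lt]

section ExtendLast

variable {m : ℕ}

def extendLast (π : Perm (Fin m)) : Perm (Fin (m + 1)) :=
  finSuccEquivLast.symm.permCongr π.optionCongr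

@[simp]
lemma extendLast_castSucc (π : Perm (Fin m)) (i : Fin m) :
    extendLast π i.castSucc = (π i).castSucc := by
  simp [extendLast, permCongr_apply, finSuccEquivLast_symm_some]

@[simp]
lemma extendLast_last (π : Perm (Fin m)) : extendLast π (Fin.last m) = Fin.last m := by
  simp [extendLast, permCongr_apply]

@[simp]
lemma extendLast_zero {k : ℕ} (π : Perm (Fin (k + 1))) : extendLast π 0 = (π 0).castSucc :=
  extendLast_castSucc π 0

lemma extendLast_injective : Function.Injective (extendLast (m := m)) :=
  (permCongr _).injective.comp optionCongr_injective

lemma exists_extendLast_eq {w : Perm (Fin (m + 1))} (hw : w (Fin.last m) = Fin.last m) :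
    ∃ π, extendLast π = w := by
  set σ := (finSuccEquivLast.symm.permCongr).symm w
  have hσ : σ none = none := by simp [σ, permCongr_apply, hw]
  refine ⟨removeNone σ, ?_⟩
  rw [extendLast, map_equiv_removeNone, hσ, swap_self, ← Perm.one_def, one_mul,
    Equiv.apply_symm_apply]

end ExtendLast

lemma eq_one_of_commute_of_isCycleOn_univ {α : Type*} {f h : Perm α}
    (hf : f.IsCycleOn Set.univ) (hfh : Commute f h) {a : α} (ha : h a = a) : h = 1 := by
  ext x
  obtain ⟨i, rfl⟩ := hf.2 (Set.mem_univ a) (Set.mem_univ x)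
  rw [← Perm.mul_apply, ((hfh.zpow_left i).eq).symm, Perm.mul_apply, ha, Perm.one_apply]

lemma isCycleOn_finRotate : ∀ m : ℕ, (finRotate (m + 1)).IsCycleOn Set.univ
  | 0 => isCycleOn_of_subsingleton (α := Fin 1) _ _
  | k + 1 => by
    convert isCycle_finRotate.isCycleOn
    exact (Set.eq_univ_of_forall fun x => mem_support.1 (support_finRotate ▸ mem_univ x)).symm

section WordCycle

variable {m : ℕ}

/-- The cycle `π 0 ↦ π 1 ↦ ⋯ ↦ π (m - 1) ↦ last ↦ π 0`. -/
def wordCycle (π : Perm (Fin m)) : Perm (Fin (m + 1)) :=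
  extendLast π * finRotate (m + 1) * (extendLast π)⁻¹

lemma isCycleOn_wordCycle (π : Perm (Fin m)) : (wordCycle π).IsCycleOn Set.univ := by
  have h := (isCycleOn_finRotate m).conj (g := extendLast π)
  rwa [Set.image_univ_of_surjective (extendLast π).surjective] at h

lemma wordCycle_injective : Function.Injective (wordCycle (m := m)) := by
  intro π π' h
  set w := extendLast π
  set w' := extendLast π'
  have hcomm : Commute (finRotate (m + 1)) (w⁻¹ * w') :=
    calc finRotate (m + 1) * (w⁻¹ * w') = w⁻¹ * wordCycle π * w' := by
          simp only [wordCycle, w]; group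
      _ = w⁻¹ * wordCycle π' * w' := by rw [h]
      _ = w⁻¹ * w' * finRotate (m + 1) := by simp only [wordCycle, w']; group
  have hfix : (w⁻¹ * w') (Fin.last _) = Fin.last _ := by simp [w, w', symm_apply_eq]
  exact extendLast_injective
    (inv_mul_eq_one.1 (eq_one_of_commute_of_isCycleOn_univ (isCycleOn_finRotate m) hcomm hfix))

lemma exists_wordCycle_eq {k : ℕ} {c : Perm (Fin (k + 2))} (hc : c.IsCycleOn Set.univ) :
    ∃ π : Perm (Fin (k + 1)), wordCycle π = c := by
  have hcyc : c.IsCycle :=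
    isCycle_iff_exists_isCycleOn.2 ⟨_, Set.nontrivial_univ, hc, fun x _ => Set.mem_univ x⟩
  have hsupp : c.support = univ :=
    eq_univ_of_forall fun x => mem_support.2 (hc.apply_ne Set.nontrivial_univ (Set.mem_univ x))
  obtain ⟨g, rfl⟩ :=
    isConj_iff.1 (isCycle_finRotate.isConj hcyc (by rw [support_finRotate, hsupp]))
  obtain ⟨i, hi⟩ := (isCycleOn_finRotate (k + 1)).2 (Set.mem_univ (Fin.last _))
    (Set.mem_univ (g⁻¹ (Fin.last _)))
  obtain ⟨π, hπ⟩ := exists_extendLast_eq (w := g * finRotate (k + 2) ^ i) (by simp [hi])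
  exact ⟨π, by rw [wordCycle, hπ]; group⟩

end WordCycle

lemma cdes_wordCycle {k : ℕ} (π : Perm (Fin (k + 1))) :
    cdes (wordCycle π) = desNum (k + 1) π + 1 := by
  rw [wordCycle, cdes_mul_mul_inv, desNum_succ, card_filter, card_filter, Fin.sum_univ_castSucc,
    Fin.sum_univ_castSucc]
  have hlast : ¬Fin.last (k + 1) < (π (Fin.last k)).castSucc := (Fin.castSucc_lt_last _).asymm
  simp [Fin.coeSucc_eq_succ, Fin.succ_castSucc, -Fin.castSucc_succ, hlast]

lemma card_isCycleOn_cdes_eq_succ (k j : ℕ) :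
    Nat.card {c : Perm (Fin (k + 2)) // c.IsCycleOn Set.univ ∧ cdes c = j + 1} =
      Nat.card {π : Perm (Fin (k + 1)) // desNum (k + 1) π = j} := by
  let e : Perm (Fin (k + 1)) ≃ {c : Perm (Fin (k + 2)) // c.IsCycleOn Set.univ} :=
    Equiv.ofBijective (fun π => ⟨wordCycle π, isCycleOn_wordCycle π⟩)
      ⟨fun _ _ h => wordCycle_injective (congrArg Subtype.val h),
        fun c => (exists_wordCycle_eq c.2).imp fun _ h => Subtype.ext h⟩
  refine (Nat.card_congr ((e.subtypeEquiv fun π => ?_).trans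
    (subtypeSubtypeEquivSubtypeInter _ fun c => cdes c = j + 1))).symm
  change _ ↔ cdes (wordCycle π) = j + 1
  rw [cdes_wordCycle, Nat.add_right_cancel_iff]

lemma card_isCycleOn_cdes_eq (k d : ℕ) :
    Nat.card {c : Perm (Fin (k + 2)) // c.IsCycleOn Set.univ ∧ cdes c = d} =
      eulerian (((k + 2 : ℕ) : ℤ) - 1) ((d : ℤ) - 1) := by
  cases d with
  | zero =>
    rw [eulerian, if_neg (by omega), Nat.card_eq_zero]
    refine Or.inl ⟨fun ⟨c, hc, h0⟩ => (cdes_pos ?_).ne' h0⟩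
    exact hc.apply_ne Set.nontrivial_univ (Set.mem_univ _)
  | succ j =>
    have hk : (((k + 2 : ℕ) : ℤ) - 1).toNat = k + 1 := by omega
    have hj : (((j + 1 : ℕ) : ℤ) - 1).toNat = j := by omega
    rw [card_isCycleOn_cdes_eq_succ, eulerian, if_pos (by omega), hk, hj]

lemma card_isCycleOn_min_cdes_casc_eq {n d : ℕ} (hn : 2 ≤ n) (hd : 2 * d < n) :
    Nat.card {c : Perm (Fin n) // c.IsCycleOn Set.univ ∧ min (cdes c) (casc c) = d} =
      2 * Nat.card {c : Perm (Fin n) // c.IsCycleOn Set.univ ∧ cdes c = d} := by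
  classical
  have : Nontrivial (Fin n) := Fin.nontrivial_iff_two_le.2 hn
  have hsum (c : Perm (Fin n)) (hc : c.IsCycleOn Set.univ) : cdes c + casc c = n :=
    cdes_add_casc fun x => hc.apply_ne Set.nontrivial_univ (Set.mem_univ x)
  have hsplit : ∀ c : Perm (Fin n), (c.IsCycleOn Set.univ ∧ min (cdes c) (casc c) = d) ↔
      (c.IsCycleOn Set.univ ∧ cdes c = d) ∨ (c.IsCycleOn Set.univ ∧ casc c = d) := by
    intro c
    by_cases hc : c.IsCycleOn Set.univ
    · have := hsum c hc
      simp only [hc, true_and]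
      omega
    · simp [hc]
  have hdisj : Disjoint (fun c : Perm (Fin n) => c.IsCycleOn Set.univ ∧ cdes c = d)
      (fun c => c.IsCycleOn Set.univ ∧ casc c = d) :=
    Pi.disjoint_iff.2 fun c => Prop.disjoint_iff.2 fun ⟨⟨hc, h₁⟩, _, h₂⟩ => by
      have := hsum c hc
      omega
  have hinv : {c : Perm (Fin n) // c.IsCycleOn Set.univ ∧ casc c = d} ≃
      {c : Perm (Fin n) // c.IsCycleOn Set.univ ∧ cdes c = d} :=
    (Equiv.inv _).subtypeEquiv fun c => by simp [cdes_inv]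
  rw [Nat.card_congr ((subtypeEquivRight hsplit).trans ((subtypeOrEquiv _ _ hdisj).trans
    (sumCongr (Equiv.refl _) hinv))), Nat.card_sum, two_mul]

theorem cycle_count_eq_two_eulerian_general (n d : ℕ) (hn : 3 ≤ n)
    (hd : d ≤ (n - 1) / 2) :
    Nat.card {c : Equiv.Perm (Fin n) //
        c.IsCycleOn (Set.univ : Set (Fin n)) ∧ min (cdes c) (casc c) = d} =
      2 * eulerian ((n : ℤ) - 1) ((d : ℤ) - 1) := by
  obtain ⟨k, rfl⟩ : ∃ k, n = k + 2 := ⟨n - 2, by omega⟩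
  rw [card_isCycleOn_min_cdes_casc_eq (by omega) (by omega), card_isCycleOn_cdes_eq]

/-- For odd `n ≥ 3` and `0 ≤ d ≤ (n-1)/2`, the number of cyclic permutations of `[n]`
(single `n`-cycles) `c` with `min(cdes c, casc c) = d` equals `2·A(n-1, d-1)`. -/
theorem cycle_count_eq_two_eulerian (n d : ℕ) (hodd : Odd n) (hn : 3 ≤ n)
    (hd : d ≤ (n - 1) / 2) :
    Nat.card {c : Equiv.Perm (Fin n) //
        c.IsCycleOn (Set.univ : Set (Fin n)) ∧ min (cdes c) (casc c) = d} =
      2 * eulerian ((n : ℤ) - 1) ((d : ℤ) - 1) :=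
  cycle_count_eq_two_eulerian_general n d hn hd
end

section
/- In the ring of formal power series in x,y,z with coefficients in ℚ[t], one has (1 − yz)·P(t,x,y,z) = 2y·( P(t,x,z) − Q(t,x,y,z) ), where P(t,x,y,z) := Σ_{n,d} Σ_{1≤i<j≤n−1} 2·p_{n,d}(i,j) t^d x^n y^i z^j/((j−i−1)!(n−j+i−2)!), P(t,x,z) := Σ_{n≥3} Σ_d Σ_{2≤u≤n−1} p_{n,d}(1,u) t^d x^n z^u/((u−2)!(n−u−1)!), and Q(t,x,y,z) := Σ_{n≥3} Σ_d Σ_{2≤u≤n−1} p_{n,d}(1,u) t^d x^n y^{n−u} z^n/((u−2)!(n−u−1)!). -/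
/-- `M(π) = Σ_c min(cdes c, casc c)` over all cycles `c` of `π`. -/
def Mstat {n : ℕ} (π : Equiv.Perm (Fin n)) : ℕ :=
  ∑ c ∈ π.cycleFactorsFinset, min (cdes c) (casc c)

/-- `π` has the three-letter word `a b c` (with `a ≠ c`) as a cyclic factor. -/
def HasCyclicFactor (n : ℕ) (π : Equiv.Perm (Fin n)) (a b c : ℕ) : Prop :=
  ∃ x y z : Fin n, (x : ℕ) + 1 = a ∧ (y : ℕ) + 1 = b ∧ (z : ℕ) + 1 = c ∧ π x = y ∧ π y = z

/-- `p_{n,d}(i,j)`: odd order permutations of length `n` with `M(π) = d` having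
`i n j` as a cyclic factor. -/
noncomputable def oddOrderCyclicCount (n d i j : ℕ) : ℕ :=
  Nat.card {π : Equiv.Perm (Fin n) //
    (∀ m ∈ π.cycleType, Odd m) ∧ Mstat π = d ∧ HasCyclicFactor n π i n j}

/-- Formal power series in `x` (index 0), `y` (index 1) and `z` (index 2)
with coefficients in `ℚ[t]`. -/
abbrev PS3 : Type := MvPowerSeries (Fin 3) (Polynomial ℚ)

/-- `P(t,x,y,z) = Σ_{n,d} Σ_{1≤i<j≤n-1} 2·p_{n,d}(i,j) t^d x^n y^i z^j/((j-i-1)!(n-j+i-2)!)`. -/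
noncomputable def PGF4 : PS3 := fun e =>
  if 1 ≤ e 1 ∧ e 1 + 1 ≤ e 2 ∧ e 2 + 1 ≤ e 0 then
    (((e 2 - e 1 - 1).factorial * (e 0 - e 2 + e 1 - 2).factorial : ℕ) : ℚ)⁻¹ •
      ∑ d ∈ Finset.range (e 0 + 1),
        ((2 * oddOrderCyclicCount (e 0) d (e 1) (e 2) : ℕ) : Polynomial ℚ) * Polynomial.X ^ d
  else 0

/-- `P(t,x,z) = Σ_{n≥3} Σ_d Σ_{2≤u≤n-1} p_{n,d}(1,u) t^d x^n z^u/((u-2)!(n-u-1)!)`,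
viewed in the variables `x,y,z` (no `y`). -/
noncomputable def PGF2 : PS3 := fun e =>
  if e 1 = 0 ∧ 3 ≤ e 0 ∧ 2 ≤ e 2 ∧ e 2 + 1 ≤ e 0 then
    (((e 2 - 2).factorial * (e 0 - e 2 - 1).factorial : ℕ) : ℚ)⁻¹ •
      ∑ d ∈ Finset.range (e 0 + 1),
        (oddOrderCyclicCount (e 0) d 1 (e 2) : Polynomial ℚ) * Polynomial.X ^ d
  else 0

/-- `Q(t,x,y,z) = Σ_{n≥3} Σ_d Σ_{2≤u≤n-1} p_{n,d}(1,u) t^d x^n y^{n-u} z^n/((u-2)!(n-u-1)!)`. -/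
noncomputable def QGF : PS3 := fun e =>
  if e 2 = e 0 ∧ 3 ≤ e 0 ∧ 1 ≤ e 1 ∧ e 1 + 2 ≤ e 0 then
    (((e 0 - e 1 - 2).factorial * (e 1 - 1).factorial : ℕ) : ℚ)⁻¹ •
      ∑ d ∈ Finset.range (e 0 + 1),
        (oddOrderCyclicCount (e 0) d 1 (e 0 - e 1) : Polynomial ℚ) * Polynomial.X ^ d
  else 0

/-!
Comparing coefficients of `x^n y^i z^j`, the identity says that in the interior `P(t,x,y,z)` has
the same coefficient at `(i, j)` as at `(i-1, j-1)`, while the boundary terms at `i = 1` and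
`j = n` are the coefficients of `2 P(t,x,z)` and `2 Q(t,x,y,z)`. All of this reduces to the shift
invariance `p_{n,d}(i,j) = p_{n,d}(i+1,j+1)`, which comes from conjugating by the cycle
`(1 2 ⋯ n-1)`: this preserves cycle types, moves the factor `i n j` to `(i+1) n (j+1)`, and
changes the descents of a cycle only at the two neighbours of `n - 1`, where a descent and an
ascent are swapped.
-/

open Equiv Finset

namespace Equiv.Perm

variable {α : Type*} [Fintype α] [DecidableEq α] [LinearOrder α] {π c : Perm α}

lemma apply_le_of_mem_cycleFactorsFinset (hc : c ∈ π.cycleFactorsFinset) {x : α}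
    (h : π x ≤ x) : c x ≤ x := by
  by_cases hx : x ∈ c.support
  · rwa [(mem_cycleFactorsFinset_iff.1 hc).2 x hx]
  · rw [notMem_support.1 hx]

lemma inv_apply_le_of_mem_cycleFactorsFinset (hc : c ∈ π.cycleFactorsFinset) {x : α}
    (h : π⁻¹ x ≤ x) : c⁻¹ x ≤ x := by
  by_cases hx : c⁻¹ x = x
  · exact hx.le
  have hmem : c⁻¹ x ∈ c.support := by simpa [mem_support] using Ne.symm hx
  have hπ : π (c⁻¹ x) = x := by simpa using ((mem_cycleFactorsFinset_iff.1 hc).2 _ hmem).symm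
  rwa [eq_inv_iff_eq.2 hπ]

end Equiv.Perm

namespace Fin

variable {n : ℕ}

lemma val_cycleRange (k x : Fin n) :
    (cycleRange k x : ℕ) = if x < k then (x : ℕ) + 1 else if x = k then 0 else (x : ℕ) := by
  rcases lt_trichotomy x k with h | rfl | h
  · simp [h, coe_cycleRange_of_lt h]
  · simp [coe_cycleRange_of_le le_rfl]
  · simp [h.not_gt, h.ne', cycleRange_of_gt h]

lemma cycleRange_lt_cycleRange_iff {k x y : Fin n} (hx : x ≠ k) (hy : y ≠ k) :
    cycleRange k x < cycleRange k y ↔ x < y := by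
  rw [lt_def, lt_def, val_cycleRange, val_cycleRange]
  rw [Ne, Fin.ext_iff] at hx hy
  simp only [lt_def]
  split_ifs <;> omega

end Fin

section CyclicStatistics

variable {n : ℕ}

lemma casc_eq_cdes_inv (c : Perm (Fin n)) : casc c = cdes c⁻¹ :=
  Finset.card_equiv c (by simp)

lemma cdes_conj (σ c : Perm (Fin n)) :
    cdes (σ * c * σ⁻¹) = #{x | σ (c x) < σ x} := by
  refine (Finset.card_equiv σ fun x => ?_).symm
  simp only [Finset.mem_filter]
  simp

/-- Relabelling by `cycleRange k` sends `k` to the bottom and keeps the relative order of all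
other points, so only comparisons of `k` with smaller points flip: the descent `k → c k`
becomes an ascent and the ascent `c⁻¹ k → k` becomes a descent. -/
lemma cdes_cycleRange_conj {k : Fin n} {c : Perm (Fin n)} (h₁ : c k ≤ k) (h₂ : c⁻¹ k ≤ k) :
    cdes (Fin.cycleRange k * c * (Fin.cycleRange k)⁻¹) = cdes c := by
  set σ := Fin.cycleRange k
  have hσk : (σ k : ℕ) = 0 := by simp [σ, Fin.val_cycleRange]
  rw [cdes_conj, cdes]
  rcases h₁.lt_or_eq with hk | hk
  · set b := c⁻¹ k
    have hcb : c b = k := by simp [b]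
    have hb : b < k := h₂.lt_of_ne fun h => hk.ne (h ▸ hcb)
    have hσb : (σ b : ℕ) = b + 1 := by simp [σ, Fin.val_cycleRange, hb]
    refine Finset.card_equiv (swap k b) fun x => ?_
    simp only [Finset.mem_filter, Finset.mem_univ, true_and]
    rcases eq_or_ne x k with rfl | hxk
    · rw [swap_apply_left, hcb, Fin.lt_def, hσk]
      simp [hb.le]
    rcases eq_or_ne x b with rfl | hxb
    · rw [swap_apply_right, hcb, Fin.lt_def, Fin.lt_def, hσk, hσb]
      simpa using hk
    · have hcx : c x ≠ k := fun h => hxb (by simp [b, ← h])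
      rw [swap_apply_of_ne_of_ne hxk hxb, Fin.cycleRange_lt_cycleRange_iff hcx hxk]
  · congr 1
    refine Finset.filter_congr fun x _ => ?_
    rcases eq_or_ne x k with rfl | hxk
    · simp [hk]
    · have hcx : c x ≠ k := fun h => hxk (c.injective (h.trans hk.symm))
      exact Fin.cycleRange_lt_cycleRange_iff hcx hxk

lemma casc_cycleRange_conj {k : Fin n} {c : Perm (Fin n)} (h₁ : c k ≤ k) (h₂ : c⁻¹ k ≤ k) :
    casc (Fin.cycleRange k * c * (Fin.cycleRange k)⁻¹) = casc c := by
  rw [casc_eq_cdes_inv, casc_eq_cdes_inv, mul_inv_rev, mul_inv_rev, inv_inv, ← mul_assoc]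
  exact cdes_cycleRange_conj h₂ (by rwa [inv_inv])

lemma Mstat_cycleRange_conj {k : Fin n} {π : Perm (Fin n)} (h₁ : π k ≤ k)
    (h₂ : π⁻¹ k ≤ k) : Mstat (Fin.cycleRange k * π * (Fin.cycleRange k)⁻¹) = Mstat π := by
  have hfactors := Perm.cycleFactorsFinset_conj π (Fin.cycleRange k)
  rw [ConjAct.smul_def, ConjAct.ofConjAct_toConjAct] at hfactors
  rw [Mstat, Mstat, hfactors, Finset.sum_map]
  refine Finset.sum_congr rfl fun c hc => ?_
  have hc₁ := Perm.apply_le_of_mem_cycleFactorsFinset hc h₁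
  have hc₂ := Perm.inv_apply_le_of_mem_cycleFactorsFinset hc h₂
  simp only [MulEquiv.toEquiv_eq_coe, Equiv.coe_toEmbedding, MulEquiv.coe_toEquiv,
    MulAut.conj_apply]
  rw [cdes_cycleRange_conj hc₁ hc₂, casc_cycleRange_conj hc₁ hc₂]

end CyclicStatistics

section CyclicFactors

variable {n : ℕ}

lemma hasCyclicFactor_iff (π : Perm (Fin n)) (x y z : Fin n) :
    HasCyclicFactor n π (x + 1) (y + 1) (z + 1) ↔ π x = y ∧ π y = z := by
  constructor
  · rintro ⟨x', y', z', hx, hy, hz, h₁, h₂⟩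
    obtain rfl : x' = x := Fin.ext (by omega)
    obtain rfl : y' = y := Fin.ext (by omega)
    obtain rfl : z' = z := Fin.ext (by omega)
    exact ⟨h₁, h₂⟩
  · rintro ⟨h₁, h₂⟩
    exact ⟨x, y, z, rfl, rfl, rfl, h₁, h₂⟩

lemma hasCyclicFactor_conj (σ π : Perm (Fin n)) (x y z : Fin n) :
    HasCyclicFactor n (σ * π * σ⁻¹) ((σ x : ℕ) + 1) ((σ y : ℕ) + 1) ((σ z : ℕ) + 1) ↔
      HasCyclicFactor n π (x + 1) (y + 1) (z + 1) := by
  simp [hasCyclicFactor_iff]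

end CyclicFactors

/-- Conjugation by `cycleRange (n - 2)`, the cycle `(1 2 ⋯ n-1)` in one-based letters, shifts the
cyclic factor `i n j` to `(i+1) n (j+1)`; it preserves `M` because the cyclic neighbours of
`n - 1` lie below it, `n` being flanked by `i` and `j`. -/
lemma oddOrderCyclicCount_succ_succ {n d i j : ℕ} (hi : 1 ≤ i) (hij : i < j) (hjn : j + 2 ≤ n) :
    oddOrderCyclicCount n d (i + 1) (j + 1) = oddOrderCyclicCount n d i j := by
  set k : Fin n := ⟨n - 2, by omega⟩
  set σ := Fin.cycleRange k
  set x : Fin n := ⟨i - 1, by omega⟩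
  set y : Fin n := ⟨n - 1, by omega⟩
  set z : Fin n := ⟨j - 1, by omega⟩
  have hxk : x < k := Fin.mk_lt_mk.2 (by omega)
  have hzk : z < k := Fin.mk_lt_mk.2 (by omega)
  have hky : k < y := Fin.mk_lt_mk.2 (by omega)
  have hx : (x : ℕ) + 1 = i := by simp [x]; omega
  have hy : (y : ℕ) + 1 = n := by simp [y]; omega
  have hz : (z : ℕ) + 1 = j := by simp [z]; omega
  have hfactor : ∀ π : Perm (Fin n), HasCyclicFactor n π i n j ↔ π x = y ∧ π y = z := by
    intro π
    rw [← hasCyclicFactor_iff, hx, hy, hz]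
  have hfactor_conj : ∀ π : Perm (Fin n),
      HasCyclicFactor n (σ * π * σ⁻¹) (i + 1) n (j + 1) ↔ HasCyclicFactor n π i n j := by
    intro π
    have h := hasCyclicFactor_conj σ π x y z
    rwa [Fin.val_cycleRange, if_pos hxk, Fin.val_cycleRange, if_neg hky.not_gt, if_neg hky.ne',
      Fin.val_cycleRange, if_pos hzk, hx, hy, hz] at h
  have hle : ∀ a : Fin n, a ≠ y → a ≤ k := by
    intro a ha
    rw [Ne, Fin.ext_iff] at ha
    rw [Fin.le_def]
    simp only [y, k] at ha ⊢
    omega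
  have hM : ∀ π : Perm (Fin n), HasCyclicFactor n π i n j →
      Mstat (σ * π * σ⁻¹) = Mstat π := by
    intro π hcf
    obtain ⟨h₁, h₂⟩ := (hfactor π).1 hcf
    refine Mstat_cycleRange_conj (hle _ fun h => hxk.ne ?_) (hle _ fun h => hzk.ne' ?_)
    · exact π.injective (h₁.trans h.symm)
    · rw [← h₂, ← Perm.inv_eq_iff_eq.1 h]
  symm
  refine Nat.card_congr ((MulAut.conj σ).toEquiv.subtypeEquiv fun π => ?_)
  simp only [MulEquiv.toEquiv_eq_coe, MulEquiv.coe_toEquiv, MulAut.conj_apply,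
    Perm.cycleType_conj, hfactor_conj]
  exact and_congr_right fun _ => and_congr_left fun hcf => by rw [hM π hcf]

lemma oddOrderCyclicCount_eq_one_left {n d i j : ℕ} (hi : 1 ≤ i) (hij : i < j) (hjn : j < n) :
    oddOrderCyclicCount n d i j = oddOrderCyclicCount n d 1 (j - i + 1) := by
  induction i, hi using Nat.le_induction generalizing j with
  | base => rw [Nat.sub_add_cancel hij.le]
  | succ i hi ih =>
    obtain ⟨j, rfl⟩ : ∃ j', j = j' + 1 := ⟨j - 1, by omega⟩
    rw [oddOrderCyclicCount_succ_succ hi (by omega) (by omega), ih (by omega) (by omega)]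
    congr 1
    omega

open Polynomial in
noncomputable def cyclicCountPoly (n i j : ℕ) : ℚ[X] :=
  ∑ d ∈ Finset.range (n + 1), (oddOrderCyclicCount n d i j : ℚ[X]) * X ^ d

lemma cyclicCountPoly_succ_succ {n i j : ℕ} (hi : 1 ≤ i) (hij : i < j) (hjn : j + 2 ≤ n) :
    cyclicCountPoly n (i + 1) (j + 1) = cyclicCountPoly n i j :=
  Finset.sum_congr rfl fun d _ => by rw [oddOrderCyclicCount_succ_succ hi hij hjn]

lemma cyclicCountPoly_eq_one_left {n i j : ℕ} (hi : 1 ≤ i) (hij : i < j) (hjn : j < n) :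
    cyclicCountPoly n i j = cyclicCountPoly n 1 (j - i + 1) :=
  Finset.sum_congr rfl fun d _ => by rw [oddOrderCyclicCount_eq_one_left hi hij hjn]

namespace MvPowerSeries

variable {σ R : Type*} [Semiring R]

theorem coeff_single_add_X_mul (s : σ) (m : σ →₀ ℕ) (f : MvPowerSeries σ R) :
    coeff (Finsupp.single s 1 + m) (X s * f) = coeff m f := by
  rw [X_def, coeff_add_monomial_mul, one_mul]

theorem coeff_X_mul_of_apply_eq_zero {s : σ} {m : σ →₀ ℕ} (h : m s = 0) (f : MvPowerSeries σ R) :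
    coeff m (X s * f) = 0 := by
  classical
  rw [X_def, coeff_monomial_mul, if_neg]
  simp [Finsupp.single_le_iff, h]

end MvPowerSeries

open MvPowerSeries

noncomputable def xyzExponent (n i j : ℕ) : Fin 3 →₀ ℕ := Finsupp.equivFunOnFinite.symm ![n, i, j]

lemma eq_xyzExponent (e : Fin 3 →₀ ℕ) : e = xyzExponent (e 0) (e 1) (e 2) := by
  ext a
  fin_cases a <;> simp [xyzExponent]

lemma coeff_xyzExponent_X_one_mul (n i j : ℕ) (f : PS3) :
    coeff (xyzExponent n (i + 1) j) (X 1 * f) = coeff (xyzExponent n i j) f := by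
  have h : xyzExponent n (i + 1) j = Finsupp.single 1 1 + xyzExponent n i j := by
    ext a
    fin_cases a <;> simp [xyzExponent, add_comm]
  rw [h, coeff_single_add_X_mul]

lemma coeff_xyzExponent_X_two_mul (n i j : ℕ) (f : PS3) :
    coeff (xyzExponent n i (j + 1)) (X 2 * f) = coeff (xyzExponent n i j) f := by
  have h : xyzExponent n i (j + 1) = Finsupp.single 2 1 + xyzExponent n i j := by
    ext a
    fin_cases a <;> simp [xyzExponent, add_comm]
  rw [h, coeff_single_add_X_mul]

lemma coeff_PGF4 (n i j : ℕ) :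
    coeff (xyzExponent n i j) PGF4 = if 1 ≤ i ∧ i + 1 ≤ j ∧ j + 1 ≤ n then
      (((j - i - 1).factorial * (n - j + i - 2).factorial : ℕ) : ℚ)⁻¹ • (2 * cyclicCountPoly n i j)
      else 0 := by
  simp [coeff_apply, PGF4, xyzExponent, cyclicCountPoly, Finset.mul_sum, mul_assoc]

lemma coeff_PGF2 (n i j : ℕ) :
    coeff (xyzExponent n i j) PGF2 = if i = 0 ∧ 3 ≤ n ∧ 2 ≤ j ∧ j + 1 ≤ n then
      (((j - 2).factorial * (n - j - 1).factorial : ℕ) : ℚ)⁻¹ • cyclicCountPoly n 1 j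
      else 0 := by
  simp [coeff_apply, PGF2, xyzExponent, cyclicCountPoly]

lemma coeff_QGF (n i j : ℕ) :
    coeff (xyzExponent n i j) QGF = if j = n ∧ 3 ≤ n ∧ 1 ≤ i ∧ i + 2 ≤ n then
      (((n - i - 2).factorial * (i - 1).factorial : ℕ) : ℚ)⁻¹ • cyclicCountPoly n 1 (n - i)
      else 0 := by
  simp [coeff_apply, QGF, xyzExponent, cyclicCountPoly]

lemma coeff_PGF4_succ_succ_sub (n i j : ℕ) :
    coeff (xyzExponent n (i + 1) (j + 1)) PGF4 - coeff (xyzExponent n i j) PGF4 =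
      2 * (coeff (xyzExponent n i (j + 1)) PGF2 - coeff (xyzExponent n i (j + 1)) QGF) := by
  rw [coeff_PGF4, coeff_PGF4, coeff_PGF2, coeff_QGF]
  rcases Nat.eq_zero_or_pos i with rfl | hi
  · split_ifs <;> try omega
    · rw [show j + 1 - (0 + 1) - 1 = j + 1 - 2 by omega,
        show n - (j + 1) + (0 + 1) - 2 = n - (j + 1) - 1 by omega, sub_zero, sub_zero,
        mul_smul_comm]
    · simp
  rcases eq_or_ne (j + 1) n with rfl | hjn
  · split_ifs <;> try omega
    · rw [show j - i - 1 = j + 1 - i - 2 by omega, show j + 1 - j + i - 2 = i - 1 by omega,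
        cyclicCountPoly_eq_one_left hi (by omega) (by omega), show j - i + 1 = j + 1 - i by omega,
        zero_sub, zero_sub, mul_neg, mul_smul_comm]
    · simp
  · split_ifs <;> try omega
    · rw [show j + 1 - (i + 1) - 1 = j - i - 1 by omega,
        show n - (j + 1) + (i + 1) - 2 = n - j + i - 2 by omega,
        cyclicCountPoly_succ_succ hi (by omega) (by omega), sub_self, sub_self, mul_zero]
    · simp

/-- `(1 - yz)·P(t,x,y,z) = 2y·(P(t,x,z) - Q(t,x,y,z))`. -/
theorem PGF4_eq :
    (1 - MvPowerSeries.X 1 * MvPowerSeries.X 2) * PGF4 =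
      2 * MvPowerSeries.X 1 * (PGF2 - QGF) := by
  have hL : (1 - X 1 * X 2) * PGF4 = PGF4 - X 1 * (X 2 * PGF4) := by ring
  have hR : 2 * X 1 * (PGF2 - QGF) = X 1 * (C 2 * (PGF2 - QGF)) := by rw [map_ofNat]; ring
  rw [hL, hR]
  refine MvPowerSeries.ext fun e => ?_
  rw [eq_xyzExponent e, map_sub]
  generalize e 0 = n, e 1 = i, e 2 = j
  rcases i with _ | i
  · rw [coeff_X_mul_of_apply_eq_zero (by simp [xyzExponent]),
      coeff_X_mul_of_apply_eq_zero (by simp [xyzExponent]), coeff_PGF4, if_neg (by omega),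
      sub_zero]
  rw [coeff_xyzExponent_X_one_mul, coeff_xyzExponent_X_one_mul]
  rcases j with _ | j
  · rw [coeff_X_mul_of_apply_eq_zero (by simp [xyzExponent]), coeff_PGF4, if_neg (by omega),
      coeff_C_mul, map_sub, coeff_PGF2, coeff_QGF, if_neg (by omega), if_neg (by omega)]
    simp
  rw [coeff_xyzExponent_X_two_mul, coeff_C_mul]
  exact coeff_PGF4_succ_succ_sub n i j
end
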